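/- arXiv:2603.14048 — 9 statements merged into one kernel-verified Lean document; each statement's English description precedes it below -/
import Mathlib

section
/- Let m, n ≥ 2 be integers. The characteristic polynomial of the Seidel matrix S(m,n) of the complete 3-uniform bipartite hypergraph C^3_{m,n} equals (X - (2n-1))^(m-1) · (X - (2m-1))^(n-1) · (X^2 - (3m+3n-4mn-2)·X + R), where R = (m-1)(n-1)(1-2n)(1-2m) - m·n·(1-2(m+n-2))^2. Consequently the Seidel spectrum of C^3_{m,n} consists of 2n-1 with multiplicity m-1, 2m-1 with multiplicity n-1, and the two numbers (3m+3n-4mn-2 ± √(16m^3 n + n^2 + 2mn(8n^2-40n+49) + m^2(32n^2-80n+1)))/2. -/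
open Polynomial Matrix

/-- The Seidel matrix of the complete 3-uniform bipartite hypergraph `C³_{m,n}`. -/
noncomputable def seidelS (m n : ℕ) : Matrix (Fin m ⊕ Fin n) (Fin m ⊕ Fin n) ℝ :=
  fun i j =>
    if i = j then 0
    else
      match i, j with
      | Sum.inl _, Sum.inl _ => 1 - 2 * (n : ℝ)
      | Sum.inr _, Sum.inr _ => 1 - 2 * (m : ℝ)
      | _, _ => 1 - 2 * ((m : ℝ) + (n : ℝ) - 2)

/-- Type-I hyperedge-deleted Seidel matrix. -/
noncomputable def seidelI (m n : ℕ) : Matrix (Fin m ⊕ Fin n) (Fin m ⊕ Fin n) ℝ :=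
  fun i j =>
    match i, j with
    | Sum.inl a, Sum.inr b =>
        if a.val = 0 ∧ b.val ≤ 1 then 1 - 2 * ((m : ℝ) + (n : ℝ) - 3)
        else seidelS m n (Sum.inl a) (Sum.inr b)
    | Sum.inr b, Sum.inl a =>
        if a.val = 0 ∧ b.val ≤ 1 then 1 - 2 * ((m : ℝ) + (n : ℝ) - 3)
        else seidelS m n (Sum.inr b) (Sum.inl a)
    | Sum.inr a, Sum.inr b =>
        if (a.val = 0 ∧ b.val = 1) ∨ (a.val = 1 ∧ b.val = 0) then 1 - 2 * ((m : ℝ) - 1)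
        else seidelS m n (Sum.inr a) (Sum.inr b)
    | Sum.inl a, Sum.inl b => seidelS m n (Sum.inl a) (Sum.inl b)

/-- Type-II hyperedge-deleted Seidel matrix. -/
noncomputable def seidelII (m n : ℕ) : Matrix (Fin m ⊕ Fin n) (Fin m ⊕ Fin n) ℝ :=
  fun i j =>
    match i, j with
    | Sum.inl a, Sum.inl b =>
        if (a.val = 0 ∧ b.val = 1) ∨ (a.val = 1 ∧ b.val = 0) then 1 - 2 * ((n : ℝ) - 1)
        else seidelS m n (Sum.inl a) (Sum.inl b)
    | Sum.inl a, Sum.inr b =>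
        if a.val ≤ 1 ∧ b.val = 0 then 1 - 2 * ((m : ℝ) + (n : ℝ) - 3)
        else seidelS m n (Sum.inl a) (Sum.inr b)
    | Sum.inr b, Sum.inl a =>
        if a.val ≤ 1 ∧ b.val = 0 then 1 - 2 * ((m : ℝ) + (n : ℝ) - 3)
        else seidelS m n (Sum.inr b) (Sum.inl a)
    | Sum.inr a, Sum.inr b => seidelS m n (Sum.inr a) (Sum.inr b)

/-- Seidel energy: sum of absolute values of the eigenvalues (roots of the
characteristic polynomial, with multiplicity). -/
noncomputable def seidelEnergy {k : Type*} [Fintype k] [DecidableEq k]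
    (M : Matrix k k ℝ) : ℝ :=
  (M.charpoly.roots.map (fun x => |x|)).sum

/-!
Write `J` for an all-ones matrix. Both diagonal blocks of `x • 1 - S(m,n)` have the form
`a • 1 + b • J`, whose determinant is `a ^ (k - 1) * (a + b * k)`, and the off-diagonal blocks are
multiples of `J`. Since `J` times such a block is again a multiple of `J`, the Schur complement of
the first diagonal block is again of the form `a' • 1 + b' • J`. This evaluates
`det (x • 1 - S(m,n))` in closed form for all but finitely many `x`, which determines the
characteristic polynomial. Its quadratic factor splits over `ℝ` because its discriminant is
`((m - 1)(1 - 2n) - (n - 1)(1 - 2m))² + 4mn(1 - 2(m + n - 2))²`.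
-/

def allOnes (p q K : Type*) [One K] : Matrix p q K := of fun _ _ => 1

lemma allOnes_mul_allOnes {p q r K : Type*} [Fintype q] [Semiring K] :
    allOnes p q K * allOnes q r K = (Fintype.card q : K) • allOnes p r K := by
  ext i j
  rw [mul_apply]
  simp [allOnes]

lemma det_smul_one_add_smul_allOnes {p K : Type*} [Fintype p] [DecidableEq p] [Nonempty p]
    [Field K] {a : K} (ha : a ≠ 0) (b : K) :
    (a • 1 + b • allOnes p p K : Matrix p p K).det
      = a ^ (Fintype.card p - 1) * (a + b * Fintype.card p) := by
  have hJ : a • 1 + b • allOnes p p K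
      = a • (1 + replicateCol Unit (fun _ => b / a) * replicateRow Unit (fun _ => (1 : K))) := by
    ext i j
    by_cases h : i = j <;> simp [allOnes, one_apply, h, mul_apply] <;> field_simp
  rw [hJ, det_smul, det_one_add_replicateCol_mul_replicateRow]
  obtain ⟨k, hk⟩ := Nat.exists_eq_add_one.mpr (Fintype.card_pos (α := p))
  simp only [dotProduct, Finset.sum_const, Finset.card_univ, nsmul_eq_mul, hk,
    add_tsub_cancel_right, pow_succ]
  field_simp

lemma allOnes_mul_smul_one_add_smul_allOnes {p q K : Type*} [Fintype p] [DecidableEq p]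
    [CommSemiring K] (a b : K) :
    allOnes q p K * (a • 1 + b • allOnes p p K : Matrix p p K)
      = (a + b * Fintype.card p) • allOnes q p K := by
  rw [Matrix.mul_add, Matrix.mul_smul, Matrix.mul_one, Matrix.mul_smul, allOnes_mul_allOnes,
    smul_smul, ← add_smul, mul_comm]

def twoBlockConst (p q : Type*) {K : Type*} [Ring K] [DecidableEq p] [DecidableEq q]
    (α β γ : K) : Matrix (p ⊕ q) (p ⊕ q) K :=
  fromBlocks (α • (allOnes p p K - 1)) (γ • allOnes p q K)
    (γ • allOnes q p K) (β • (allOnes q q K - 1))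

section TwoBlockConst

variable {p q K : Type*} [Fintype p] [Fintype q] [DecidableEq p] [DecidableEq q] [Field K]

lemma scalar_sub_twoBlockConst (α β γ x : K) :
    scalar (p ⊕ q) x - twoBlockConst p q α β γ
      = fromBlocks ((x + α) • 1 + (-α) • allOnes p p K) ((-γ) • allOnes p q K)
          ((-γ) • allOnes q p K) ((x + β) • 1 + (-β) • allOnes q q K) := by
  rw [twoBlockConst, scalar_apply, ← smul_one_eq_diagonal, ← fromBlocks_one, fromBlocks_smul,
    sub_eq_add_neg, fromBlocks_neg, fromBlocks_add]
  congr 1 <;> module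

lemma det_scalar_sub_twoBlockConst [Nonempty p] [Nonempty q] {α β γ x : K}
    (hα : x + α ≠ 0) (hβ : x + β ≠ 0) (hc : x + α - α * Fintype.card p ≠ 0) :
    (scalar (p ⊕ q) x - twoBlockConst p q α β γ).det
      = (x + α) ^ (Fintype.card p - 1) * (x + β) ^ (Fintype.card q - 1) *
        ((x + α - α * Fintype.card p) * (x + β - β * Fintype.card q)
          - Fintype.card p * Fintype.card q * γ ^ 2) := by
  set c := x + α - α * Fintype.card p
  set A : Matrix p p K := (x + α) • 1 + (-α) • allOnes p p K
  have hdetA : A.det = (x + α) ^ (Fintype.card p - 1) * c := by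
    rw [det_smul_one_add_smul_allOnes hα]; ring
  have : Invertible A :=
    invertibleOfIsUnitDet A (by rw [hdetA]; exact (pow_ne_zero _ hα).isUnit.mul hc.isUnit)
  have hJA : allOnes q p K * ⅟A = c⁻¹ • allOnes q p K := by
    have h : allOnes q p K * A = c • allOnes q p K := by
      rw [allOnes_mul_smul_one_add_smul_allOnes, neg_mul, ← sub_eq_add_neg]
    calc allOnes q p K * ⅟A = (c⁻¹ • c • allOnes q p K) * ⅟A := by
          rw [smul_smul, inv_mul_cancel₀ hc, one_smul]
      _ = c⁻¹ • allOnes q p K := by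
          rw [Matrix.smul_mul, ← h, Matrix.mul_assoc, mul_invOf_self, Matrix.mul_one]
  have hSchur :
      (x + β) • 1 + (-β) • allOnes q q K - (-γ) • allOnes q p K * ⅟A * (-γ) • allOnes p q K
        = (x + β) • 1 + (-β - γ ^ 2 * Fintype.card p / c) • allOnes q q K := by
    rw [Matrix.smul_mul, Matrix.mul_smul, hJA, Matrix.smul_mul, Matrix.smul_mul,
      allOnes_mul_allOnes]
    module
  rw [scalar_sub_twoBlockConst, det_fromBlocks₁₁, hSchur, hdetA,
    det_smul_one_add_smul_allOnes hβ]
  field_simp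
  ring

end TwoBlockConst

theorem charpoly_twoBlockConst {p q K : Type*} [Fintype p] [Fintype q] [DecidableEq p]
    [DecidableEq q] [Nonempty p] [Nonempty q] [Field K] [Infinite K] (α β γ : K) :
    (twoBlockConst p q α β γ).charpoly
      = (X + C α) ^ (Fintype.card p - 1) * (X + C β) ^ (Fintype.card q - 1) *
        (X ^ 2 - C ((Fintype.card p - 1) * α + (Fintype.card q - 1) * β) * X
          + C ((Fintype.card p - 1) * (Fintype.card q - 1) * α * β
            - Fintype.card p * Fintype.card q * γ ^ 2)) := by
  apply eq_of_infinite_eval_eq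
  refine Set.Infinite.mono ?_ (Set.toFinite {-α, -β, α * Fintype.card p - α}).infinite_compl
  intro x hx
  simp only [Set.mem_compl_iff, Set.mem_insert_iff, Set.mem_singleton_iff, not_or] at hx
  obtain ⟨hα, hβ, hc⟩ := hx
  rw [Set.mem_ofPred_eq, eval_charpoly,
    det_scalar_sub_twoBlockConst (fun h => hα (by linear_combination h))
      (fun h => hβ (by linear_combination h)) (fun h => hc (by linear_combination h))]
  simp only [eval_mul, eval_pow, eval_add, eval_sub, eval_X, eval_C]
  ring

lemma X_sq_sub_C_mul_X_add_C_eq_mul {K : Type*} [Field K] [CharZero K] {b c s : K}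
    (hs : s * s = b ^ 2 - 4 * c) :
    X ^ 2 - C b * X + C c = (X - C ((b + s) / 2)) * (X - C ((b - s) / 2)) := by
  have hb : C b = C ((b + s) / 2) + C ((b - s) / 2) := by rw [← C_add]; ring_nf
  have hc : C c = C ((b + s) / 2) * C ((b - s) / 2) := by
    rw [← C_mul]; congr 1; linear_combination (1 / 4 : K) * hs
  rw [hb, hc]
  ring

lemma roots_X_sub_C_pow_mul_X_sub_C_pow_mul {K : Type*} [CommRing K] [IsDomain K]
    (a b u v : K) (k l : ℕ) :
    ((X - C a) ^ k * (X - C b) ^ l * ((X - C u) * (X - C v))).roots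
      = Multiset.replicate k a + Multiset.replicate l b + {u, v} := by
  have ha : ((X - C a) ^ k).Monic := (monic_X_sub_C a).pow k
  have hb : ((X - C b) ^ l).Monic := (monic_X_sub_C b).pow l
  have huv : ((X - C u) * (X - C v)).Monic := (monic_X_sub_C u).mul (monic_X_sub_C v)
  rw [roots_mul ((ha.mul hb).mul huv).ne_zero, roots_mul (ha.mul hb).ne_zero,
    roots_mul huv.ne_zero, roots_pow, roots_pow]
  simp only [roots_X_sub_C, Multiset.nsmul_singleton]
  rfl

lemma seidelS_eq_twoBlockConst (m n : ℕ) :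
    seidelS m n = twoBlockConst (Fin m) (Fin n) (1 - 2 * (n : ℝ)) (1 - 2 * (m : ℝ))
      (1 - 2 * ((m : ℝ) + n - 2)) := by
  ext (a | a) (b | b)
  · by_cases h : a = b <;> simp [seidelS, twoBlockConst, allOnes, one_apply, h]
  · simp [seidelS, twoBlockConst, allOnes]
  · simp [seidelS, twoBlockConst, allOnes]
  · by_cases h : a = b <;> simp [seidelS, twoBlockConst, allOnes, one_apply, h]

lemma charpoly_seidelS {m n : ℕ} (hm : 0 < m) (hn : 0 < n) :
    (seidelS m n).charpoly =
      (X - C (2*(n:ℝ) - 1)) ^ (m - 1) * (X - C (2*(m:ℝ) - 1)) ^ (n - 1) *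
        (X ^ 2 - C (3*(m:ℝ) + 3*n - 4*m*n - 2) * X +
          C (((m:ℝ)-1) * ((n:ℝ)-1) * (1 - 2*(n:ℝ)) * (1 - 2*(m:ℝ)) -
              (m:ℝ) * n * (1 - 2*((m:ℝ) + n - 2))^2)) := by
  have : Nonempty (Fin m) := ⟨⟨0, hm⟩⟩
  have : Nonempty (Fin n) := ⟨⟨0, hn⟩⟩
  rw [seidelS_eq_twoBlockConst, charpoly_twoBlockConst]
  simp only [Fintype.card_fin, map_sub, map_add, map_mul, map_pow, map_natCast, map_one,
    map_ofNat]
  ring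

theorem stmt0 (m n : ℕ) (hm : 2 ≤ m) (hn : 2 ≤ n) :
    (seidelS m n).charpoly =
      (X - C (2*(n:ℝ) - 1)) ^ (m - 1) * (X - C (2*(m:ℝ) - 1)) ^ (n - 1) *
        (X ^ 2 - C (3*(m:ℝ) + 3*n - 4*m*n - 2) * X +
          C (((m:ℝ)-1) * ((n:ℝ)-1) * (1 - 2*(n:ℝ)) * (1 - 2*(m:ℝ)) -
              (m:ℝ) * n * (1 - 2*((m:ℝ) + n - 2))^2)) ∧
    (seidelS m n).charpoly.roots =
      Multiset.replicate (m - 1) (2*(n:ℝ) - 1) +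
      Multiset.replicate (n - 1) (2*(m:ℝ) - 1) +
      {(3*(m:ℝ) + 3*n - 4*m*n - 2 +
          Real.sqrt (16*(m:ℝ)^3*n + (n:ℝ)^2 + 2*(m:ℝ)*n*(8*(n:ℝ)^2 - 40*n + 49) +
            (m:ℝ)^2*(32*(n:ℝ)^2 - 80*n + 1))) / 2,
       (3*(m:ℝ) + 3*n - 4*m*n - 2 -
          Real.sqrt (16*(m:ℝ)^3*n + (n:ℝ)^2 + 2*(m:ℝ)*n*(8*(n:ℝ)^2 - 40*n + 49) +
            (m:ℝ)^2*(32*(n:ℝ)^2 - 80*n + 1))) / 2} := by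
  have hpoly := charpoly_seidelS (m := m) (n := n) (by omega) (by omega)
  refine ⟨hpoly, ?_⟩
  have hΔ : 0 ≤ 16*(m:ℝ)^3*n + (n:ℝ)^2 + 2*(m:ℝ)*n*(8*(n:ℝ)^2 - 40*n + 49) +
      (m:ℝ)^2*(32*(n:ℝ)^2 - 80*n + 1) := by
    have h : 16*(m:ℝ)^3*n + (n:ℝ)^2 + 2*(m:ℝ)*n*(8*(n:ℝ)^2 - 40*n + 49) +
        (m:ℝ)^2*(32*(n:ℝ)^2 - 80*n + 1)
          = ((1 - 2*(n:ℝ)) * (m - 1) - (1 - 2*(m:ℝ)) * (n - 1)) ^ 2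
            + 4 * m * n * (1 - 2 * ((m:ℝ) + n - 2)) ^ 2 := by ring
    rw [h]
    positivity
  rw [hpoly, X_sq_sub_C_mul_X_add_C_eq_mul (by rw [Real.mul_self_sqrt hΔ]; ring),
    roots_X_sub_C_pow_mul_X_sub_C_pow_mul]
end

section
/- Let m ≥ 2 and n ≥ 3 be integers and let S_I(m,n) be the Type-I hyperedge-deleted Seidel matrix. For any two distinct indices i, j of the first block different from its first index, the vector e_i - e_j satisfies S_I(m,n)·(e_i - e_j) = (2n-1)·(e_i - e_j); and for any two distinct indices i, j of the second block different from its first two indices, S_I(m,n)·(e_i - e_j) = (2m-1)·(e_i - e_j). In particular 2n-1 is an eigenvalue of S_I(m,n) of multiplicity at least m-2 and 2m-1 is an eigenvalue of multiplicity at least n-3. -/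
open Polynomial Matrix

/-! For `i ≠ j` the vector `e_i - e_j` is sent by a matrix to the difference of its columns `i`
and `j`. In `S_I(m,n)` the columns of two first-block indices other than the first agree off the
rows `i, j` (the deleted hyperedge only touches the first index of that block), and at those rows
the difference is `±(0 - (1 - 2n))`; likewise in the second block away from its first two
indices. Fixing one such index `j₀`, the vectors `e_i - e_{j₀}` are linearly independent
eigenvectors, and geometric multiplicity bounds algebraic multiplicity. -/

namespace Matrix

variable {K ι : Type*} [Field K] [Fintype ι] [DecidableEq ι]

theorem mulVec_single_one_sub_single_one (M : Matrix ι ι K) (i j : ι) :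
    M *ᵥ (Pi.single i 1 - Pi.single j 1) = fun x => M x i - M x j := by
  ext x
  simp [mulVec_sub, mulVec_single]

theorem card_sub_one_le_rootMultiplicity (M : Matrix ι ι K) (μ : K) (S : Finset ι)
    (hS : ∀ i ∈ S, ∀ j ∈ S, i ≠ j →
      M *ᵥ (Pi.single i 1 - Pi.single j 1) = μ • (Pi.single i 1 - Pi.single j 1)) :
    S.card - 1 ≤ M.charpoly.rootMultiplicity μ := by
  obtain rfl | ⟨j₀, hj₀⟩ := S.eq_empty_or_nonempty
  · simp
  let v : S.erase j₀ → ι → K := fun i => Pi.single (i : ι) 1 - Pi.single j₀ 1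
  have hv : LinearIndependent K v := by
    refine LinearIndependent.of_comp (LinearMap.funLeft K K ((↑) : S.erase j₀ → ι)) ?_
    convert Pi.linearIndependent_single_one (S.erase j₀) K using 1
    ext i k
    have hk : (k : ι) ≠ j₀ := (Finset.mem_erase.mp k.2).1
    simp only [Function.comp_apply, LinearMap.funLeft_apply, v, Pi.sub_apply]
    rw [Pi.single_apply, Pi.single_apply, Pi.single_apply, if_neg hk, sub_zero]
    simp only [Subtype.ext_iff]
  have hspan : Submodule.span K (Set.range v) ≤ Module.End.eigenspace (M.toLin') μ := by
    rw [Submodule.span_le]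
    rintro _ ⟨i, rfl⟩
    rw [SetLike.mem_coe, Module.End.mem_eigenspace_iff, toLin'_apply]
    exact hS i (Finset.mem_of_mem_erase i.2) j₀ hj₀ (Finset.ne_of_mem_erase i.2)
  calc S.card - 1 = Module.finrank K (Submodule.span K (Set.range v)) := by
        rw [finrank_span_eq_card hv, Fintype.card_coe, Finset.card_erase_of_mem hj₀]
    _ ≤ Module.finrank K (Module.End.eigenspace (M.toLin') μ) := Submodule.finrank_mono hspan
    _ ≤ M.charpoly.rootMultiplicity μ := by
        rw [← charpoly_toLin']
        exact LinearMap.finrank_eigenspace_le _ μ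

end Matrix

open Finset

theorem Fin.card_filter_le_val (m k : ℕ) : #{i : Fin m | k ≤ (i : ℕ)} = m - k := by
  have := Finset.card_filter_add_card_filter_not (s := Finset.univ) (fun i : Fin m => (i : ℕ) < k)
  simp only [not_lt, Finset.card_univ, Fintype.card_fin, Fin.card_filter_val_lt] at this
  omega

theorem seidelI_mulVec_inl_sub_inl {m n : ℕ} {i j : Fin m} (hij : i ≠ j) (hi : i.val ≠ 0)
    (hj : j.val ≠ 0) :
    seidelI m n *ᵥ (Pi.single (Sum.inl i) 1 - Pi.single (Sum.inl j) 1) =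
      (2 * (n : ℝ) - 1) • (Pi.single (Sum.inl i) 1 - Pi.single (Sum.inl j) 1) := by
  rw [Matrix.mulVec_single_one_sub_single_one]
  ext (a | b)
  · by_cases hai : a = i <;> by_cases haj : a = j <;> simp_all [seidelI, seidelS]
  · simp [seidelI, seidelS, hi, hj]

theorem seidelI_mulVec_inr_sub_inr {m n : ℕ} {i j : Fin n} (hij : i ≠ j) (hi : 2 ≤ i.val)
    (hj : 2 ≤ j.val) :
    seidelI m n *ᵥ (Pi.single (Sum.inr i) 1 - Pi.single (Sum.inr j) 1) =
      (2 * (m : ℝ) - 1) • (Pi.single (Sum.inr i) 1 - Pi.single (Sum.inr j) 1) := by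
  rw [Matrix.mulVec_single_one_sub_single_one]
  obtain ⟨hi0, hi1, hi'⟩ : i.val ≠ 0 ∧ i.val ≠ 1 ∧ ¬ i.val ≤ 1 := by omega
  obtain ⟨hj0, hj1, hj'⟩ : j.val ≠ 0 ∧ j.val ≠ 1 ∧ ¬ j.val ≤ 1 := by omega
  ext (a | b)
  · simp [seidelI, seidelS, hi', hj']
  · by_cases hbi : b = i <;> by_cases hbj : b = j <;> simp_all [seidelI, seidelS]

theorem stmt5_general (m n : ℕ) :
    (∀ i j : Fin m, i ≠ j → i.val ≠ 0 → j.val ≠ 0 →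
      (seidelI m n).mulVec
          (Pi.single (Sum.inl i) (1:ℝ) - Pi.single (Sum.inl j) (1:ℝ)) =
        (2*(n:ℝ) - 1) • (Pi.single (Sum.inl i) (1:ℝ) - Pi.single (Sum.inl j) (1:ℝ))) ∧
    (∀ i j : Fin n, i ≠ j → 2 ≤ i.val → 2 ≤ j.val →
      (seidelI m n).mulVec
          (Pi.single (Sum.inr i) (1:ℝ) - Pi.single (Sum.inr j) (1:ℝ)) =
        (2*(m:ℝ) - 1) • (Pi.single (Sum.inr i) (1:ℝ) - Pi.single (Sum.inr j) (1:ℝ))) ∧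
    m - 2 ≤ (seidelI m n).charpoly.rootMultiplicity (2*(n:ℝ) - 1) ∧
    n - 3 ≤ (seidelI m n).charpoly.rootMultiplicity (2*(m:ℝ) - 1) := by
  refine ⟨fun _ _ => seidelI_mulVec_inl_sub_inl, fun _ _ => seidelI_mulVec_inr_sub_inr, ?_, ?_⟩
  · have h := (seidelI m n).card_sub_one_le_rootMultiplicity _
      ((univ.filter fun i : Fin m => 1 ≤ i.val).map .inl) <| by
        simp only [mem_map, mem_filter, mem_univ, true_and, Function.Embedding.inl_apply]
        rintro _ ⟨i, hi, rfl⟩ _ ⟨j, hj, rfl⟩ hij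
        exact seidelI_mulVec_inl_sub_inl (ne_of_apply_ne _ hij) (by omega) (by omega)
    rw [card_map, Fin.card_filter_le_val] at h
    omega
  · have h := (seidelI m n).card_sub_one_le_rootMultiplicity _
      ((univ.filter fun i : Fin n => 2 ≤ i.val).map .inr) <| by
        simp only [mem_map, mem_filter, mem_univ, true_and, Function.Embedding.inr_apply]
        rintro _ ⟨i, hi, rfl⟩ _ ⟨j, hj, rfl⟩ hij
        exact seidelI_mulVec_inr_sub_inr (ne_of_apply_ne _ hij) hi hj
    rw [card_map, Fin.card_filter_le_val] at h
    omega

theorem stmt5 (m n : ℕ) (hm : 2 ≤ m) (hn : 3 ≤ n) :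
    (∀ i j : Fin m, i ≠ j → i.val ≠ 0 → j.val ≠ 0 →
      (seidelI m n).mulVec
          (Pi.single (Sum.inl i) (1:ℝ) - Pi.single (Sum.inl j) (1:ℝ)) =
        (2*(n:ℝ) - 1) • (Pi.single (Sum.inl i) (1:ℝ) - Pi.single (Sum.inl j) (1:ℝ))) ∧
    (∀ i j : Fin n, i ≠ j → 2 ≤ i.val → 2 ≤ j.val →
      (seidelI m n).mulVec
          (Pi.single (Sum.inr i) (1:ℝ) - Pi.single (Sum.inr j) (1:ℝ)) =
        (2*(m:ℝ) - 1) • (Pi.single (Sum.inr i) (1:ℝ) - Pi.single (Sum.inr j) (1:ℝ))) ∧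
    m - 2 ≤ (seidelI m n).charpoly.rootMultiplicity (2*(n:ℝ) - 1) ∧
    n - 3 ≤ (seidelI m n).charpoly.rootMultiplicity (2*(m:ℝ) - 1) :=
  stmt5_general m n
end

section
/- Let m ≥ 3 and n ≥ 2 be integers. The characteristic polynomial of the Type-II hyperedge-deleted Seidel matrix S_II(m,n) equals (X-(2n-1))^(m-3) · (X-(2m-1))^(n-2) · p_Q2(X), where p_Q2 is the characteristic polynomial of the 5×5 real matrix Q2 with rows: [0, 1-2(n-1), 1-2(m+n-3), (m-2)(1-2n), (n-1)(1-2(m+n-2))]; [1-2(n-1), 0, 1-2(m+n-3), (m-2)(1-2n), (n-1)(1-2(m+n-2))]; [1-2(m+n-3), 1-2(m+n-3), 0, (m-2)(1-2(m+n-2)), (n-1)(1-2m)]; [1-2n, 1-2n, 1-2(m+n-2), (m-3)(1-2n), (n-1)(1-2(m+n-2))]; [1-2(m+n-2), 1-2(m+n-2), 1-2m, (m-2)(1-2(m+n-2)), (n-2)(1-2m)]. Consequently the Seidel spectrum of C^3_{m,n} - e (Type-II deletion) is 2n-1 with multiplicity m-3, 2m-1 with multiplicity n-2, together with the five eigenvalues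 of Q2. -/
open Polynomial Matrix

/-- The 5×5 quotient matrix for the Type-II hyperedge deletion. -/
noncomputable def Q2 (m n : ℕ) : Matrix (Fin 5) (Fin 5) ℝ :=
  !![0, 1 - 2*((n:ℝ)-1), 1 - 2*((m:ℝ)+n-3), ((m:ℝ)-2)*(1-2*n), ((n:ℝ)-1)*(1-2*((m:ℝ)+n-2));
     1 - 2*((n:ℝ)-1), 0, 1 - 2*((m:ℝ)+n-3), ((m:ℝ)-2)*(1-2*n), ((n:ℝ)-1)*(1-2*((m:ℝ)+n-2));
     1 - 2*((m:ℝ)+n-3), 1 - 2*((m:ℝ)+n-3), 0, ((m:ℝ)-2)*(1-2*((m:ℝ)+n-2)), ((n:ℝ)-1)*(1-2*m);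
     1 - 2*(n:ℝ), 1 - 2*(n:ℝ), 1 - 2*((m:ℝ)+n-2), ((m:ℝ)-3)*(1-2*n), ((n:ℝ)-1)*(1-2*((m:ℝ)+n-2));
     1 - 2*((m:ℝ)+n-2), 1 - 2*((m:ℝ)+n-2), 1 - 2*(m:ℝ), ((m:ℝ)-2)*(1-2*((m:ℝ)+n-2)), ((n:ℝ)-2)*(1-2*m)]


section AuxSums

open Finset

lemma finCardFilterLE (m t : ℕ) :
    ((Finset.univ : Finset (Fin m)).filter fun k => t ≤ k.val).card = m - t := by
  rw [Finset.card_filter]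
  rw [Fin.sum_univ_eq_sum_range (fun j => if t ≤ j then 1 else 0) m]
  rw [← Finset.card_filter]
  have : (Finset.range m).filter (fun k => t ≤ k) = Finset.Ico t m := by
    ext x; simp [Finset.mem_Ico]; omega
  rw [this, Nat.card_Ico]

lemma prod_filter_le {R : Type*} [CommMonoid R] (m t : ℕ) (c : R) :
    ∏ i : Fin m, (if t ≤ i.val then c else 1) = c ^ (m - t) := by
  rw [Finset.prod_ite, Finset.prod_const, Finset.prod_const_one, mul_one, finCardFilterLE]

lemma sum_single_aux {N : ℕ} (g : Fin N → ℝ) (a : Fin N) :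
    ∑ k, (if k = a then g k else 0) = g a := by
  rw [Finset.sum_ite_eq' Finset.univ a g]
  simp

lemma sum_lt_three {m : ℕ} (hm : 3 ≤ m) (g : Fin m → ℝ) :
    ∑ k, (if k.val < 3 then g k else 0)
      = g ⟨0, by omega⟩ + g ⟨1, by omega⟩ + g ⟨2, by omega⟩ := by
  have : ∀ k : Fin m, (if k.val < 3 then g k else 0) =
      (if k = ⟨0, by omega⟩ then g k else 0) + (if k = ⟨1, by omega⟩ then g k else 0)
        + (if k = ⟨2, by omega⟩ then g k else 0) := by
    intro k
    by_cases h0 : k = ⟨0, by omega⟩ <;> by_cases h1 : k = ⟨1, by omega⟩ <;>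
      by_cases h2 : k = ⟨2, by omega⟩ <;>
      simp_all [Fin.ext_iff] <;> omega
  rw [Finset.sum_congr rfl (fun k _ => this k), Finset.sum_add_distrib,
    Finset.sum_add_distrib, sum_single_aux, sum_single_aux, sum_single_aux]

lemma sum_lt_two {n : ℕ} (hn : 2 ≤ n) (g : Fin n → ℝ) :
    ∑ k, (if k.val < 2 then g k else 0) = g ⟨0, by omega⟩ + g ⟨1, by omega⟩ := by
  have : ∀ k : Fin n, (if k.val < 2 then g k else 0) =
      (if k = ⟨0, by omega⟩ then g k else 0) + (if k = ⟨1, by omega⟩ then g k else 0) := by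
    intro k
    by_cases h0 : k = ⟨0, by omega⟩ <;> by_cases h1 : k = ⟨1, by omega⟩ <;>
      simp_all [Fin.ext_iff] <;> omega
  rw [Finset.sum_congr rfl (fun k _ => this k), Finset.sum_add_distrib,
    sum_single_aux, sum_single_aux]

lemma sum_fin_split {N t : ℕ} (f : Fin N → ℝ) (p q : Fin N) (y : ℝ)
    (h : ∀ k, t ≤ k.val → k ≠ p → k ≠ q → f k = y) :
    ∑ k, f k = (∑ k, if k.val < t then f k - y else 0)
      + (if t ≤ p.val then f p - y else 0)
      + (if t ≤ q.val ∧ q ≠ p then f q - y else 0) + N * y := by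
  have key : ∀ k : Fin N, f k = (if k.val < t then f k - y else 0)
      + (if k = p then (if t ≤ p.val then f p - y else 0) else 0)
      + (if k = q then (if t ≤ q.val ∧ q ≠ p then f q - y else 0) else 0) + y := by
    intro k
    by_cases hk : t ≤ k.val
    · by_cases hp : k = p
      · subst hp
        simp [hk, Nat.not_lt.mpr hk]
        by_cases hq : k = q
        · subst hq; simp
        · simp [hq, Ne.symm hq]
      · by_cases hq : k = q
        · subst hq
          simp [hk, Nat.not_lt.mpr hk, hp, hp]
        · simp [Nat.not_lt.mpr hk, hp, hq, h k hk hp hq]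
    · have hk' : k.val < t := by omega
      have hp : ¬ (t ≤ p.val) ∨ ¬ k = p := by
        by_cases e : k = p
        · left; subst e; omega
        · right; exact e
      have hq : ¬ (t ≤ q.val) ∨ ¬ k = q := by
        by_cases e : k = q
        · left; subst e; omega
        · right; exact e
      rcases hp with hp | hp <;> rcases hq with hq | hq <;>
        simp [hk', hp, hq]
  rw [Finset.sum_congr rfl (fun k _ => key k)]
  rw [Finset.sum_add_distrib, Finset.sum_add_distrib, Finset.sum_add_distrib,
    sum_single_aux, sum_single_aux, Finset.sum_const, Finset.card_univ, Fintype.card_fin,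
    nsmul_eq_mul]

lemma sum_fin_three {m : ℕ} (hm : 3 ≤ m) (f : Fin m → ℝ) (p q : Fin m) (y : ℝ)
    (h : ∀ k, 3 ≤ k.val → k ≠ p → k ≠ q → f k = y) :
    ∑ k, f k = f ⟨0, by omega⟩ + f ⟨1, by omega⟩ + f ⟨2, by omega⟩
      + (if 3 ≤ p.val then f p - y else 0)
      + (if 3 ≤ q.val ∧ q ≠ p then f q - y else 0)
      + ((m : ℝ) - 3) * y := by
  rw [sum_fin_split f p q y h, sum_lt_three hm]
  ring

lemma sum_fin_two {n : ℕ} (hn : 2 ≤ n) (f : Fin n → ℝ) (p q : Fin n) (y : ℝ)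
    (h : ∀ k, 2 ≤ k.val → k ≠ p → k ≠ q → f k = y) :
    ∑ k, f k = f ⟨0, by omega⟩ + f ⟨1, by omega⟩
      + (if 2 ≤ p.val then f p - y else 0)
      + (if 2 ≤ q.val ∧ q ≠ p then f q - y else 0)
      + ((n : ℝ) - 2) * y := by
  rw [sum_fin_split f p q y h, sum_lt_two hn]
  ring

end AuxSums

noncomputable def Pmat (m n : ℕ) : Matrix (Fin m ⊕ Fin n) (Fin m ⊕ Fin n) ℝ :=
  fun i j =>
    match i, j with
    | Sum.inl i, Sum.inl j =>
        if j.val = 0 then (if i.val = 0 then 1 else 0)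
        else if j.val = 1 then (if i.val = 1 then 1 else 0)
        else if j.val = 2 then (if 2 ≤ i.val then 1 else 0)
        else (if i.val = 2 then 1 else if i = j then -1 else 0)
    | Sum.inr i, Sum.inr j =>
        if j.val = 0 then (if i.val = 0 then 1 else 0)
        else if j.val = 1 then (if 1 ≤ i.val then 1 else 0)
        else (if i.val = 1 then 1 else if i = j then -1 else 0)
    | _, _ => 0

noncomputable def Pinvmat (m n : ℕ) : Matrix (Fin m ⊕ Fin n) (Fin m ⊕ Fin n) ℝ :=
  fun i j =>
    match i, j with
    | Sum.inl i, Sum.inl j =>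
        if i.val = 0 then (if j.val = 0 then 1 else 0)
        else if i.val = 1 then (if j.val = 1 then 1 else 0)
        else if i.val = 2 then (if 2 ≤ j.val then ((m : ℝ) - 2)⁻¹ else 0)
        else (if 2 ≤ j.val then (((m : ℝ) - 2)⁻¹ - (if j = i then 1 else 0)) else 0)
    | Sum.inr i, Sum.inr j =>
        if i.val = 0 then (if j.val = 0 then 1 else 0)
        else if i.val = 1 then (if 1 ≤ j.val then ((n : ℝ) - 1)⁻¹ else 0)
        else (if 1 ≤ j.val then (((n : ℝ) - 1)⁻¹ - (if j = i then 1 else 0)) else 0)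
    | _, _ => 0

noncomputable def Dmat (m n : ℕ) : Matrix (Fin m ⊕ Fin n) (Fin m ⊕ Fin n) ℝ :=
  fun i j =>
    match i, j with
    | Sum.inl i, Sum.inl j =>
        if 3 ≤ j.val then (if i = j then 2*(n:ℝ) - 1 else 0)
        else if j.val = 2 then
          (if i.val = 0 then ((m:ℝ)-2)*(1-2*n) else if i.val = 1 then ((m:ℝ)-2)*(1-2*n)
           else if i.val = 2 then ((m:ℝ)-3)*(1-2*n) else 0)
        else
          if i.val = 2 then 1-2*(n:ℝ)
          else if i = j then 0
          else if i.val ≤ 1 then 1-2*((n:ℝ)-1)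
          else 0
    | Sum.inl i, Sum.inr j =>
        if j.val = 0 then (if i.val ≤ 1 then 1-2*((m:ℝ)+n-3) else if i.val = 2 then 1-2*((m:ℝ)+n-2) else 0)
        else if j.val = 1 then (if i.val ≤ 2 then ((n:ℝ)-1)*(1-2*((m:ℝ)+n-2)) else 0)
        else 0
    | Sum.inr i, Sum.inl j =>
        if j.val ≤ 1 then (if i.val = 0 then 1-2*((m:ℝ)+n-3) else if i.val = 1 then 1-2*((m:ℝ)+n-2) else 0)
        else if j.val = 2 then (if i.val ≤ 1 then ((m:ℝ)-2)*(1-2*((m:ℝ)+n-2)) else 0)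
        else 0
    | Sum.inr i, Sum.inr j =>
        if 2 ≤ j.val then (if i = j then 2*(m:ℝ) - 1 else 0)
        else if j.val = 0 then (if i.val = 1 then 1-2*(m:ℝ) else 0)
        else (if i.val = 0 then ((n:ℝ)-1)*(1-2*m) else if i.val = 1 then ((n:ℝ)-2)*(1-2*m) else 0)

def bfun (m n : ℕ) : Fin m ⊕ Fin n → Fin 2 :=
  Sum.elim (fun i => if i.val ≤ 2 then 0 else 1) (fun i => if i.val ≤ 1 then 0 else 1)

set_option maxHeartbeats 3200000 in
lemma mulP (m n : ℕ) (hm : 3 ≤ m) (hn : 2 ≤ n) :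
    seidelII m n * Pmat m n = Pmat m n * Dmat m n := by
  ext i j
  rcases i with i | i <;> rcases j with j | j <;>
    rw [Matrix.mul_apply, Matrix.mul_apply, Fintype.sum_sum_type, Fintype.sum_sum_type]
  · -- (inl i, inl j)
    have e1 : ∑ k : Fin n, seidelII m n (.inl i) (.inr k) * Pmat m n (.inr k) (.inl j) = 0 := by
      simp [Pmat]
    have e2 : ∑ k : Fin n, Pmat m n (.inl i) (.inr k) * Dmat m n (.inr k) (.inl j) = 0 := by
      simp [Pmat]
    rw [e1, e2, add_zero, add_zero]
    rw [sum_fin_three hm (fun k => seidelII m n (.inl i) (.inl k) * Pmat m n (.inl k) (.inl j)) i j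
          (if j.val = 2 then (1 - 2*(n:ℝ)) else 0)
          (by intro k hk3 hki hkj
              simp only [seidelII, seidelS, Pmat, Sum.inl.injEq, reduceCtorEq]
              simp only [Fin.ext_iff] at *
              split_ifs <;> (first | ring1 | (exfalso; first | assumption | omega))),
        sum_fin_three hm (fun k => Pmat m n (.inl i) (.inl k) * Dmat m n (.inl k) (.inl j)) i j
          0
          (by intro k hk3 hki hkj
              simp only [Pmat, Dmat, Sum.inl.injEq, reduceCtorEq]
              simp only [Fin.ext_iff] at *
              split_ifs <;> (first | ring1 | (exfalso; first | assumption | omega)))]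
    have hc : (i:ℕ) = 0 ∨ (i:ℕ) = 1 ∨ (i:ℕ) = 2 ∨ 3 ≤ (i:ℕ) := by omega
    simp only [seidelII, seidelS, Pmat, Dmat, Sum.inl.injEq, reduceCtorEq, Fin.ext_iff]
    rcases hc with hi | hi | hi | hi <;>
      [skip; skip; skip; (have h0 : ¬ (i:ℕ) = 0 := by omega;
                          have h1 : ¬ (i:ℕ) = 1 := by omega;
                          have h2 : ¬ (i:ℕ) = 2 := by omega;
                          have h2' : 2 ≤ (i:ℕ) := by omega;
                          simp only [h0, h1, h2, h2', if_true, if_false])] <;>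
      simp only [hi, if_true, if_false] <;>
      norm_num <;>
      (try split_ifs) <;> (first | rfl | ring1 | (exfalso; first | assumption | omega))
  · -- (inl i, inr j)
    have e1 : ∑ k : Fin m, seidelII m n (.inl i) (.inl k) * Pmat m n (.inl k) (.inr j) = 0 := by
      simp [Pmat]
    have e2 : ∑ k : Fin n, Pmat m n (.inl i) (.inr k) * Dmat m n (.inr k) (.inr j) = 0 := by
      simp [Pmat]
    rw [e1, e2, add_zero, zero_add]
    rw [sum_fin_two hn (fun k => seidelII m n (.inl i) (.inr k) * Pmat m n (.inr k) (.inr j)) j j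
          (if j.val = 1 then (1 - 2*((m:ℝ)+(n:ℝ)-2)) else 0)
          (by intro k hk2 hkj hkj'
              simp only [seidelII, seidelS, Pmat, Sum.inr.injEq, reduceCtorEq]
              simp only [Fin.ext_iff] at *
              split_ifs <;> (first | ring1 | (exfalso; first | assumption | omega))),
        sum_fin_three hm (fun k => Pmat m n (.inl i) (.inl k) * Dmat m n (.inl k) (.inr j)) i i
          0
          (by intro k hk3 hki hki'
              simp only [Pmat, Dmat, Sum.inl.injEq, reduceCtorEq]
              simp only [Fin.ext_iff] at *
              split_ifs <;> (first | ring1 | (exfalso; first | assumption | omega)))]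
    have hc : (i:ℕ) = 0 ∨ (i:ℕ) = 1 ∨ (i:ℕ) = 2 ∨ 3 ≤ (i:ℕ) := by omega
    simp only [seidelII, seidelS, Pmat, Dmat, Sum.inl.injEq, Sum.inr.injEq, reduceCtorEq, Fin.ext_iff]
    rcases hc with hi | hi | hi | hi <;>
      [skip; skip; skip; (have h0 : ¬ (i:ℕ) = 0 := by omega;
                          have h1 : ¬ (i:ℕ) = 1 := by omega;
                          have h2 : ¬ (i:ℕ) = 2 := by omega;
                          have h2' : 2 ≤ (i:ℕ) := by omega;
                          simp only [h0, h1, h2, h2', if_true, if_false])] <;>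
      simp only [hi, if_true, if_false] <;>
      norm_num <;>
      (try split_ifs) <;> (first | rfl | ring1 | (exfalso; first | assumption | omega))
  · -- (inr i, inl j)
    have e1 : ∑ k : Fin n, seidelII m n (.inr i) (.inr k) * Pmat m n (.inr k) (.inl j) = 0 := by
      simp [Pmat]
    have e2 : ∑ k : Fin m, Pmat m n (.inr i) (.inl k) * Dmat m n (.inl k) (.inl j) = 0 := by
      simp [Pmat]
    rw [e1, e2, add_zero, zero_add]
    rw [sum_fin_three hm (fun k => seidelII m n (.inr i) (.inl k) * Pmat m n (.inl k) (.inl j)) j j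
          (if j.val = 2 then (1 - 2*((m:ℝ)+(n:ℝ)-2)) else 0)
          (by intro k hk3 hkj hkj'
              simp only [seidelII, seidelS, Pmat, Sum.inl.injEq, reduceCtorEq]
              simp only [Fin.ext_iff] at *
              split_ifs <;> (first | ring1 | (exfalso; first | assumption | omega))),
        sum_fin_two hn (fun k => Pmat m n (.inr i) (.inr k) * Dmat m n (.inr k) (.inl j)) i i
          0
          (by intro k hk2 hki hki'
              simp only [Pmat, Dmat, Sum.inr.injEq, reduceCtorEq]
              simp only [Fin.ext_iff] at *
              split_ifs <;> (first | ring1 | (exfalso; first | assumption | omega)))]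
    have hc : (i:ℕ) = 0 ∨ (i:ℕ) = 1 ∨ 2 ≤ (i:ℕ) := by omega
    simp only [seidelII, seidelS, Pmat, Dmat, Sum.inl.injEq, Sum.inr.injEq, reduceCtorEq, Fin.ext_iff]
    rcases hc with hi | hi | hi <;>
      [skip; skip; (have h0 : ¬ (i:ℕ) = 0 := by omega;
                    have h1 : ¬ (i:ℕ) = 1 := by omega;
                    have h1' : 1 ≤ (i:ℕ) := by omega;
                    simp only [h0, h1, h1', if_true, if_false])] <;>
      simp only [hi, if_true, if_false] <;>
      norm_num <;>
      (try split_ifs) <;> (first | rfl | ring1 | (exfalso; first | assumption | omega))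
  · -- (inr i, inr j)
    have e1 : ∑ k : Fin m, seidelII m n (.inr i) (.inl k) * Pmat m n (.inl k) (.inr j) = 0 := by
      simp [Pmat]
    have e2 : ∑ k : Fin m, Pmat m n (.inr i) (.inl k) * Dmat m n (.inl k) (.inr j) = 0 := by
      simp [Pmat]
    rw [e1, e2, zero_add, zero_add]
    rw [sum_fin_two hn (fun k => seidelII m n (.inr i) (.inr k) * Pmat m n (.inr k) (.inr j)) i j
          (if j.val = 1 then (1 - 2*(m:ℝ)) else 0)
          (by intro k hk2 hki hkj
              simp only [seidelII, seidelS, Pmat, Sum.inr.injEq, reduceCtorEq]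
              simp only [Fin.ext_iff] at *
              split_ifs <;> (first | ring1 | (exfalso; first | assumption | omega))),
        sum_fin_two hn (fun k => Pmat m n (.inr i) (.inr k) * Dmat m n (.inr k) (.inr j)) i j
          0
          (by intro k hk2 hki hkj
              simp only [Pmat, Dmat, Sum.inr.injEq, reduceCtorEq]
              simp only [Fin.ext_iff] at *
              split_ifs <;> (first | ring1 | (exfalso; first | assumption | omega)))]
    have hc : (i:ℕ) = 0 ∨ (i:ℕ) = 1 ∨ 2 ≤ (i:ℕ) := by omega
    simp only [seidelII, seidelS, Pmat, Dmat, Sum.inr.injEq, reduceCtorEq, Fin.ext_iff]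
    rcases hc with hi | hi | hi <;>
      [skip; skip; (have h0 : ¬ (i:ℕ) = 0 := by omega;
                    have h1 : ¬ (i:ℕ) = 1 := by omega;
                    have h1' : 1 ≤ (i:ℕ) := by omega;
                    simp only [h0, h1, h1', if_true, if_false])] <;>
      simp only [hi, if_true, if_false] <;>
      norm_num <;>
      (try split_ifs) <;> (first | rfl | ring1 | (exfalso; first | assumption | omega))
set_option maxHeartbeats 3200000 in
lemma PPinv (m n : ℕ) (hm : 3 ≤ m) (hn : 2 ≤ n) :
    Pmat m n * Pinvmat m n = 1 := by
  have hm2 : ((m:ℝ) - 2) ≠ 0 := by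
    have : (3:ℝ) ≤ (m:ℝ) := by exact_mod_cast hm
    intro h; nlinarith
  have hn1 : ((n:ℝ) - 1) ≠ 0 := by
    have : (2:ℝ) ≤ (n:ℝ) := by exact_mod_cast hn
    intro h; nlinarith
  ext i j
  rcases i with i | i <;> rcases j with j | j <;>
    rw [Matrix.mul_apply, Fintype.sum_sum_type]
  · -- (inl i, inl j)
    have e1 : ∑ k : Fin n, Pmat m n (.inl i) (.inr k) * Pinvmat m n (.inr k) (.inl j) = 0 := by
      simp [Pmat]
    rw [e1, add_zero]
    rw [sum_fin_three hm (fun k => Pmat m n (.inl i) (.inl k) * Pinvmat m n (.inl k) (.inl j)) i j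
          (if (i:ℕ) = 2 ∧ 2 ≤ (j:ℕ) then ((m:ℝ) - 2)⁻¹ else 0)
          (by intro k hk3 hki hkj
              simp only [Pmat, Pinvmat, Sum.inl.injEq, reduceCtorEq]
              simp only [Fin.ext_iff] at *
              split_ifs <;> (first | ring1 | (exfalso; first | assumption | omega)))]
    rw [Matrix.one_apply]
    have hc : (i:ℕ) = 0 ∨ (i:ℕ) = 1 ∨ (i:ℕ) = 2 ∨ 3 ≤ (i:ℕ) := by omega
    simp only [Pmat, Pinvmat, Sum.inl.injEq, reduceCtorEq, Fin.ext_iff]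
    rcases hc with hi | hi | hi | hi <;>
      [skip; skip; skip; (have h0 : ¬ (i:ℕ) = 0 := by omega;
                          have h1 : ¬ (i:ℕ) = 1 := by omega;
                          have h2 : ¬ (i:ℕ) = 2 := by omega;
                          have h2' : 2 ≤ (i:ℕ) := by omega;
                          simp only [h0, h1, h2, h2', if_true, if_false])] <;>
      simp only [hi, if_true, if_false] <;>
      norm_num <;>
      (try split_ifs) <;>
      (first | rfl | ring1 | (exfalso; first | assumption | omega) | (field_simp; ring1))
  · have e1 : ∑ k : Fin m, Pmat m n (.inl i) (.inl k) * Pinvmat m n (.inl k) (.inr j) = 0 := by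
      simp [Pinvmat]
    have e2 : ∑ k : Fin n, Pmat m n (.inl i) (.inr k) * Pinvmat m n (.inr k) (.inr j) = 0 := by
      simp [Pmat]
    rw [e1, e2, add_zero, Matrix.one_apply]
    simp
  · have e1 : ∑ k : Fin m, Pmat m n (.inr i) (.inl k) * Pinvmat m n (.inl k) (.inl j) = 0 := by
      simp [Pmat]
    have e2 : ∑ k : Fin n, Pmat m n (.inr i) (.inr k) * Pinvmat m n (.inr k) (.inl j) = 0 := by
      simp [Pinvmat]
    rw [e1, e2, add_zero, Matrix.one_apply]
    simp
  · -- (inr i, inr j)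
    have e1 : ∑ k : Fin m, Pmat m n (.inr i) (.inl k) * Pinvmat m n (.inl k) (.inr j) = 0 := by
      simp [Pmat]
    rw [e1, zero_add]
    rw [sum_fin_two hn (fun k => Pmat m n (.inr i) (.inr k) * Pinvmat m n (.inr k) (.inr j)) i j
          (if (i:ℕ) = 1 ∧ 1 ≤ (j:ℕ) then ((n:ℝ) - 1)⁻¹ else 0)
          (by intro k hk2 hki hkj
              simp only [Pmat, Pinvmat, Sum.inr.injEq, reduceCtorEq]
              simp only [Fin.ext_iff] at *
              split_ifs <;> (first | ring1 | (exfalso; first | assumption | omega)))]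
    rw [Matrix.one_apply]
    have hc : (i:ℕ) = 0 ∨ (i:ℕ) = 1 ∨ 2 ≤ (i:ℕ) := by omega
    simp only [Pmat, Pinvmat, Sum.inr.injEq, reduceCtorEq, Fin.ext_iff]
    rcases hc with hi | hi | hi <;>
      [skip; skip; (have h0 : ¬ (i:ℕ) = 0 := by omega;
                    have h1 : ¬ (i:ℕ) = 1 := by omega;
                    have h1' : 1 ≤ (i:ℕ) := by omega;
                    simp only [h0, h1, h1', if_true, if_false])] <;>
      simp only [hi, if_true, if_false] <;>
      norm_num <;>
      (try split_ifs) <;>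
      (first | rfl | ring1 | (exfalso; first | assumption | omega) | (field_simp; ring1))
lemma charpoly_seidelII_eq_D (m n : ℕ) (hm : 3 ≤ m) (hn : 2 ≤ n) :
    (seidelII m n).charpoly = (Dmat m n).charpoly := by
  classical
  have hMP := mulP m n hm hn
  have hPP := PPinv m n hm hn
  have hdet : (Pmat m n).det * (Pinvmat m n).det = 1 := by
    rw [← Matrix.det_mul, hPP, Matrix.det_one]
  have hPne : (Pmat m n).det ≠ 0 := left_ne_zero_of_mul_eq_one hdet
  set Pc : Matrix (Fin m ⊕ Fin n) (Fin m ⊕ Fin n) ℝ[X] :=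
    (Pmat m n).map (⇑(Polynomial.C : ℝ →+* ℝ[X])) with hPc
  have key : charmatrix (seidelII m n) * Pc = Pc * charmatrix (Dmat m n) := by
    have h1 : (seidelII m n).map (⇑(Polynomial.C : ℝ →+* ℝ[X])) * Pc
        = Pc * (Dmat m n).map (⇑(Polynomial.C : ℝ →+* ℝ[X])) := by
      rw [hPc, ← Matrix.map_mul, hMP, Matrix.map_mul]
    have h2 : (Matrix.scalar (Fin m ⊕ Fin n) (X : ℝ[X])) * Pc
        = Pc * Matrix.scalar (Fin m ⊕ Fin n) (X : ℝ[X]) :=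
      (Matrix.scalar_commute (X : ℝ[X]) (fun r => Commute.all _ r) Pc).eq
    show (Matrix.scalar _ (X : ℝ[X]) - (Polynomial.C : ℝ →+* ℝ[X]).mapMatrix (seidelII m n)) * Pc
        = Pc * (Matrix.scalar _ (X : ℝ[X]) - (Polynomial.C : ℝ →+* ℝ[X]).mapMatrix (Dmat m n))
    rw [sub_mul, mul_sub, h2, RingHom.mapMatrix_apply, RingHom.mapMatrix_apply, h1]
  have hdets := congrArg Matrix.det key
  rw [Matrix.det_mul, Matrix.det_mul] at hdets
  have hPcdet : Pc.det = Polynomial.C ((Pmat m n).det) :=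
    ((Polynomial.C : ℝ →+* ℝ[X]).map_det (Pmat m n)).symm
  rw [hPcdet] at hdets
  have hCne : (Polynomial.C ((Pmat m n).det) : ℝ[X]) ≠ 0 := by
    simpa using hPne
  apply mul_left_cancel₀ hCne
  show Polynomial.C ((Pmat m n).det) * (charmatrix (seidelII m n)).det
      = Polynomial.C ((Pmat m n).det) * (charmatrix (Dmat m n)).det
  rw [← hdets]
  exact mul_comm _ _

lemma bt_D (m n : ℕ) : (Dmat m n).BlockTriangular (bfun m n) := by
  rintro (i | i) (j | j) hij <;>
    simp only [bfun, Sum.elim_inl, Sum.elim_inr] at hij <;>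
    split_ifs at hij with ha hb <;>
    first
      | exact absurd hij (by decide)
      | (simp only [Dmat]
         split_ifs <;> first | rfl | (exfalso; omega))

lemma charpoly_diagonal' {ι : Type*} [Fintype ι] [DecidableEq ι] (d : ι → ℝ) :
    (Matrix.diagonal d).charpoly = ∏ i, ((X : ℝ[X]) - Polynomial.C (d i)) := by
  rw [Matrix.charpoly]
  have h : charmatrix (Matrix.diagonal d)
      = Matrix.diagonal (fun i => (X : ℝ[X]) - Polynomial.C (d i)) := by
    ext i j
    by_cases h : i = j
    · subst h
      rw [charmatrix_apply_eq, Matrix.diagonal_apply_eq, Matrix.diagonal_apply_eq]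
    · rw [charmatrix_apply_ne _ _ _ h, Matrix.diagonal_apply_ne _ h,
        Matrix.diagonal_apply_ne _ h, map_zero, neg_zero]
  rw [h, Matrix.det_diagonal]

def qTo (m n : ℕ) : {x : Fin m ⊕ Fin n // bfun m n x = 0} → Fin 5 := fun x =>
  Sum.elim (fun i : Fin m => if i.val = 0 then 0 else if i.val = 1 then (1 : Fin 5) else 3)
           (fun i : Fin n => if i.val = 0 then 2 else 4) x.1

def qInv (m n : ℕ) (hm : 3 ≤ m) (hn : 2 ≤ n) :
    Fin 5 → {x : Fin m ⊕ Fin n // bfun m n x = 0} :=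
  ![⟨.inl ⟨0, by omega⟩, by simp [bfun]⟩,
    ⟨.inl ⟨1, by omega⟩, by simp [bfun]⟩,
    ⟨.inr ⟨0, by omega⟩, by simp [bfun]⟩,
    ⟨.inl ⟨2, by omega⟩, by simp [bfun]⟩,
    ⟨.inr ⟨1, by omega⟩, by simp [bfun]⟩]

lemma bfun_inl_le {m n : ℕ} {i : Fin m} (h : bfun m n (.inl i) = 0) : i.val ≤ 2 := by
  by_contra hc
  simp only [bfun, Sum.elim_inl, if_neg hc] at h
  exact absurd h (by decide)

lemma bfun_inr_le {m n : ℕ} {i : Fin n} (h : bfun m n (.inr i) = 0) : i.val ≤ 1 := by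
  by_contra hc
  simp only [bfun, Sum.elim_inr, if_neg hc] at h
  exact absurd h (by decide)

def qEquiv (m n : ℕ) (hm : 3 ≤ m) (hn : 2 ≤ n) :
    {x : Fin m ⊕ Fin n // bfun m n x = 0} ≃ Fin 5 where
  toFun := qTo m n
  invFun := qInv m n hm hn
  left_inv := by
    rintro ⟨(i | i), hx⟩
    · have hb := bfun_inl_le hx
      have hc : i.val = 0 ∨ i.val = 1 ∨ i.val = 2 := by omega
      rcases hc with h | h | h <;>
        simp [qTo, qInv, h, Subtype.ext_iff, Fin.ext_iff]
    · have hb := bfun_inr_le hx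
      have hc : i.val = 0 ∨ i.val = 1 := by omega
      rcases hc with h | h <;>
        simp [qTo, qInv, h, Subtype.ext_iff, Fin.ext_iff]
  right_inv := by
    intro k
    fin_cases k <;> simp [qTo, qInv, Fin.ext_iff]
lemma bfun_inl_ge {m n : ℕ} {i : Fin m} (h : bfun m n (.inl i) = 1) : 3 ≤ i.val := by
  by_contra hc
  simp only [bfun, Sum.elim_inl, if_pos (by omega : i.val ≤ 2)] at h
  exact absurd h (by decide)

lemma bfun_inr_ge {m n : ℕ} {i : Fin n} (h : bfun m n (.inr i) = 1) : 2 ≤ i.val := by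
  by_contra hc
  simp only [bfun, Sum.elim_inr, if_pos (by omega : i.val ≤ 1)] at h
  exact absurd h (by decide)

set_option maxHeartbeats 1600000 in
lemma charpolyD (m n : ℕ) (hm : 3 ≤ m) (hn : 2 ≤ n) :
    (Dmat m n).charpoly =
      (X - C (2*(n:ℝ) - 1)) ^ (m - 3) * (X - C (2*(m:ℝ) - 1)) ^ (n - 2) * (Q2 m n).charpoly := by
  classical
  have hsplit : (Dmat m n).charpoly =
      ((Dmat m n).toSquareBlock (bfun m n) 0).charpoly
        * ((Dmat m n).toSquareBlock (bfun m n) 1).charpoly := by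
    have h := (Matrix.charmatrix_blockTriangular_iff.mpr (bt_D m n)).det_fintype
    rw [Matrix.charpoly, h, Fin.prod_univ_two]
    congr 1 <;> rw [← Matrix.charmatrix_toSquareBlock] <;> rfl
  have hB0 : (Dmat m n).toSquareBlock (bfun m n) 0
      = (Q2 m n).submatrix (qEquiv m n hm hn) (qEquiv m n hm hn) := by
    ext x y
    obtain ⟨x, hx⟩ := x
    obtain ⟨y, hy⟩ := y
    rcases x with i | i <;> rcases y with j | j
    · have hbi := bfun_inl_le hx
      have hbj := bfun_inl_le hy
      have hci : i.val = 0 ∨ i.val = 1 ∨ i.val = 2 := by omega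
      have hcj : j.val = 0 ∨ j.val = 1 ∨ j.val = 2 := by omega
      rcases hci with h | h | h <;> rcases hcj with h' | h' | h' <;>
        simp [Matrix.toSquareBlock_def, Matrix.submatrix_apply, qEquiv, qTo, Dmat, Q2,
          h, h', Fin.ext_iff] <;> norm_num
    · have hbi := bfun_inl_le hx
      have hbj := bfun_inr_le hy
      have hci : i.val = 0 ∨ i.val = 1 ∨ i.val = 2 := by omega
      have hcj : j.val = 0 ∨ j.val = 1 := by omega
      rcases hci with h | h | h <;> rcases hcj with h' | h' <;>
        simp [Matrix.toSquareBlock_def, Matrix.submatrix_apply, qEquiv, qTo, Dmat, Q2,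
          h, h', Fin.ext_iff] <;> norm_num
    · have hbi := bfun_inr_le hx
      have hbj := bfun_inl_le hy
      have hci : i.val = 0 ∨ i.val = 1 := by omega
      have hcj : j.val = 0 ∨ j.val = 1 ∨ j.val = 2 := by omega
      rcases hci with h | h <;> rcases hcj with h' | h' | h' <;>
        simp [Matrix.toSquareBlock_def, Matrix.submatrix_apply, qEquiv, qTo, Dmat, Q2,
          h, h', Fin.ext_iff] <;> norm_num
    · have hbi := bfun_inr_le hx
      have hbj := bfun_inr_le hy
      have hci : i.val = 0 ∨ i.val = 1 := by omega
      have hcj : j.val = 0 ∨ j.val = 1 := by omega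
      rcases hci with h | h <;> rcases hcj with h' | h' <;>
        simp [Matrix.toSquareBlock_def, Matrix.submatrix_apply, qEquiv, qTo, Dmat, Q2,
          h, h', Fin.ext_iff] <;> norm_num
  have hb0c : ((Dmat m n).toSquareBlock (bfun m n) 0).charpoly = (Q2 m n).charpoly := by
    rw [hB0]
    have h : (Q2 m n).submatrix (qEquiv m n hm hn) (qEquiv m n hm hn)
        = Matrix.reindex (qEquiv m n hm hn).symm (qEquiv m n hm hn).symm (Q2 m n) := rfl
    rw [h, Matrix.charpoly_reindex]
  have hB1 : (Dmat m n).toSquareBlock (bfun m n) 1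
      = Matrix.diagonal (fun x : {x : Fin m ⊕ Fin n // bfun m n x = 1} =>
          Sum.elim (fun _ : Fin m => 2*(n:ℝ)-1) (fun _ : Fin n => 2*(m:ℝ)-1) x.1) := by
    ext x y
    obtain ⟨x, hx⟩ := x
    obtain ⟨y, hy⟩ := y
    rcases x with i | i <;> rcases y with j | j
    · have hbj := bfun_inl_ge hy
      by_cases h : i = j <;>
        simp [Matrix.toSquareBlock_def, Matrix.diagonal_apply, Subtype.ext_iff, Dmat, h,
          (by omega : 3 ≤ j.val)]
    · have hbi := bfun_inl_ge hx
      have hbj := bfun_inr_ge hy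
      simp [Matrix.toSquareBlock_def, Matrix.diagonal_apply, Subtype.ext_iff, Dmat]
      rw [if_neg (by omega : ¬ (j:ℕ) = 0), if_neg (by omega : ¬ (j:ℕ) = 1)]
    · have hbi := bfun_inr_ge hx
      have hbj := bfun_inl_ge hy
      simp [Matrix.toSquareBlock_def, Matrix.diagonal_apply, Subtype.ext_iff, Dmat]
      rw [if_neg (by omega : ¬ (j:ℕ) ≤ 1), if_neg (by omega : ¬ (j:ℕ) = 2)]
    · have hbj := bfun_inr_ge hy
      by_cases h : i = j <;>
        simp [Matrix.toSquareBlock_def, Matrix.diagonal_apply, Subtype.ext_iff, Dmat, h,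
          (by omega : 2 ≤ j.val)]
  have hb1c : ((Dmat m n).toSquareBlock (bfun m n) 1).charpoly
      = (X - C (2*(n:ℝ) - 1)) ^ (m - 3) * (X - C (2*(m:ℝ) - 1)) ^ (n - 2) := by
    rw [hB1, charpoly_diagonal']
    rw [← Finset.prod_subtype (Finset.univ.filter fun x => bfun m n x = 1) (by simp)
          (fun x : Fin m ⊕ Fin n => (X:ℝ[X]) - C (Sum.elim (fun _ : Fin m => 2*(n:ℝ)-1)
            (fun _ : Fin n => 2*(m:ℝ)-1) x))]
    rw [Finset.prod_filter, Fintype.prod_sum_type]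
    have h1 : ∀ i : Fin m, (if bfun m n (.inl i) = 1 then
          (X:ℝ[X]) - C (Sum.elim (fun _ : Fin m => 2*(n:ℝ)-1) (fun _ : Fin n => 2*(m:ℝ)-1)
            (Sum.inl i)) else 1)
        = if 3 ≤ i.val then (X:ℝ[X]) - C (2*(n:ℝ)-1) else 1 := by
      intro i
      by_cases h : 3 ≤ i.val
      · have hno : ¬ i.val ≤ 2 := by omega
        have hb : bfun m n (Sum.inl i) = 1 := by simp [bfun, hno]
        rw [if_pos hb, if_pos h]
        rfl
      · have hno : i.val ≤ 2 := by omega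
        have hb : ¬ bfun m n (Sum.inl i) = 1 := by simp [bfun, hno]
        rw [if_neg hb, if_neg h]
    have h2 : ∀ i : Fin n, (if bfun m n (.inr i) = 1 then
          (X:ℝ[X]) - C (Sum.elim (fun _ : Fin m => 2*(n:ℝ)-1) (fun _ : Fin n => 2*(m:ℝ)-1)
            (Sum.inr i)) else 1)
        = if 2 ≤ i.val then (X:ℝ[X]) - C (2*(m:ℝ)-1) else 1 := by
      intro i
      by_cases h : 2 ≤ i.val
      · have hno : ¬ i.val ≤ 1 := by omega
        have hb : bfun m n (Sum.inr i) = 1 := by simp [bfun, hno]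
        rw [if_pos hb, if_pos h]
        rfl
      · have hno : i.val ≤ 1 := by omega
        have hb : ¬ bfun m n (Sum.inr i) = 1 := by simp [bfun, hno]
        rw [if_neg hb, if_neg h]
    rw [Finset.prod_congr rfl (fun i _ => h1 i), Finset.prod_congr rfl (fun i _ => h2 i),
      prod_filter_le, prod_filter_le]
  rw [hsplit, hb0c, hb1c]
  ring
theorem stmt6 (m n : ℕ) (hm : 3 ≤ m) (hn : 2 ≤ n) :
    (seidelII m n).charpoly =
      (X - C (2*(n:ℝ) - 1)) ^ (m - 3) * (X - C (2*(m:ℝ) - 1)) ^ (n - 2) *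
        (Q2 m n).charpoly ∧
    (seidelII m n).charpoly.roots =
      Multiset.replicate (m - 3) (2*(n:ℝ) - 1) +
      Multiset.replicate (n - 2) (2*(m:ℝ) - 1) +
      (Q2 m n).charpoly.roots := by
  have h1 : (seidelII m n).charpoly =
      (X - C (2*(n:ℝ) - 1)) ^ (m - 3) * (X - C (2*(m:ℝ) - 1)) ^ (n - 2) * (Q2 m n).charpoly := by
    rw [charpoly_seidelII_eq_D m n hm hn, charpolyD m n hm hn]
  refine ⟨h1, ?_⟩
  have hQ : (Q2 m n).charpoly ≠ 0 := (Matrix.charpoly_monic _).ne_zero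
  have hA : ((X : ℝ[X]) - C (2*(n:ℝ) - 1)) ^ (m - 3) ≠ 0 :=
    pow_ne_zero _ (Polynomial.X_sub_C_ne_zero _)
  have hB : ((X : ℝ[X]) - C (2*(m:ℝ) - 1)) ^ (n - 2) ≠ 0 :=
    pow_ne_zero _ (Polynomial.X_sub_C_ne_zero _)
  rw [h1, Polynomial.roots_mul (mul_ne_zero (mul_ne_zero hA hB) hQ),
    Polynomial.roots_mul (mul_ne_zero hA hB), Polynomial.roots_pow, Polynomial.roots_pow,
    Polynomial.roots_X_sub_C, Polynomial.roots_X_sub_C, Multiset.nsmul_singleton,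
    Multiset.nsmul_singleton]
end

section
/- Let m ≥ 3 and n ≥ 2 be integers and let S_II(m,n) be the Type-II hyperedge-deleted Seidel matrix. For any two distinct indices i, j of the first block different from its first two indices, the vector e_i - e_j satisfies S_II(m,n)·(e_i - e_j) = (2n-1)·(e_i - e_j); and for any two distinct indices i, j of the second block different from its first index, S_II(m,n)·(e_i - e_j) = (2m-1)·(e_i - e_j). In particular 2n-1 is an eigenvalue of S_II(m,n) of multiplicity at least m-3 and 2m-1 is an eigenvalue of multiplicity at least n-2. -/
open Polynomial Matrix

/-! If the columns `i` and `j` of a matrix agree outside the rows `i` and `j`, then `e_i - e_j` is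
an eigenvector with eigenvalue `M i i - M i j`. The hyperedge deletion only changes entries in the
rows and columns of the first two indices of the first block and the first index of the second,
so this applies to the remaining pairs in each block. Fixing one such index `p`, the vectors
`e_i - e_p` are linearly independent, and the geometric multiplicity of an eigenvalue bounds its
algebraic multiplicity. -/

namespace Matrix

variable {ι R : Type*} [Fintype ι] [DecidableEq ι]

theorem mulVec_single_sub_single_eq_smul [Ring R] {M : Matrix ι ι R} {i j : ι} (hij : i ≠ j)
    {c : R} (hi : M i i - M i j = c) (hj : M j j - M j i = c)
    (hk : ∀ k, k ≠ i → k ≠ j → M k i = M k j) :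
    M *ᵥ (Pi.single i 1 - Pi.single j 1) = c • (Pi.single i 1 - Pi.single j 1) := by
  ext k
  simp only [mulVec_sub, mulVec_single_one, col_apply, Pi.sub_apply, Pi.smul_apply, smul_eq_mul]
  by_cases hki : k = i
  · subst hki; simp [hij, hi]
  by_cases hkj : k = j
  · subst hkj; simp [Ne.symm hij, ← hj]
  simp [hki, hkj, hk k hki hkj]

theorem card_le_rootMultiplicity_charpoly [Field R] {κ : Type*} [Fintype κ] (M : Matrix ι ι R)
    (μ : R) {v : κ → ι → R} (hv : LinearIndependent R v) (hev : ∀ t, M *ᵥ v t = μ • v t) :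
    Fintype.card κ ≤ M.charpoly.rootMultiplicity μ := by
  have hspan : Submodule.span R (Set.range v) ≤ Module.End.eigenspace (toLin' M) μ :=
    Submodule.span_le.mpr <| Set.range_subset_iff.mpr fun t ↦
      Module.End.mem_eigenspace_iff.mpr <| by rw [toLin'_apply, hev]
  calc Fintype.card κ = Module.finrank R (Submodule.span R (Set.range v)) :=
        (finrank_span_eq_card hv).symm
    _ ≤ Module.finrank R (Module.End.eigenspace (toLin' M) μ) := Submodule.finrank_mono hspan
    _ ≤ (toLin' M).charpoly.rootMultiplicity μ := LinearMap.finrank_eigenspace_le _ μ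
    _ = M.charpoly.rootMultiplicity μ := by rw [charpoly_toLin']

end Matrix

theorem linearIndependent_single_sub_single {ι κ R : Type*} [DecidableEq ι] [Ring R]
    {f : κ → ι} (hf : Function.Injective f) {p : ι} (hp : ∀ t, f t ≠ p) :
    LinearIndependent R fun t ↦ (Pi.single (f t) 1 - Pi.single p 1 : ι → R) := by
  rw [linearIndependent_iff']
  intro s g hg t ht
  have := congrFun hg (f t)
  simp only [Finset.sum_apply, Pi.smul_apply, Pi.sub_apply, Pi.single_apply,
    if_neg (hp t), sub_zero, smul_eq_mul, mul_ite, mul_one, mul_zero] at this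
  rwa [Finset.sum_eq_single_of_mem t ht fun b _ hb ↦ if_neg (hf.ne hb.symm), if_pos rfl] at this

section SeidelII

variable {m n : ℕ}

theorem seidelII_inl_inl_of_two_le (a : Fin m) {j : Fin m} (hj : 2 ≤ j.val) :
    seidelII m n (Sum.inl a) (Sum.inl j) = if a = j then 0 else 1 - 2 * (n : ℝ) := by
  have : ¬((a.val = 0 ∧ j.val = 1) ∨ (a.val = 1 ∧ j.val = 0)) := by omega
  simp [seidelII, seidelS, this]

theorem seidelII_inr_inl_of_two_le (b : Fin n) {j : Fin m} (hj : 2 ≤ j.val) :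
    seidelII m n (Sum.inr b) (Sum.inl j) = 1 - 2 * ((m : ℝ) + n - 2) := by
  have : ¬(j.val ≤ 1 ∧ b.val = 0) := by omega
  simp [seidelII, seidelS, this]

theorem seidelII_inl_inr_of_ne_zero (a : Fin m) {j : Fin n} (hj : j.val ≠ 0) :
    seidelII m n (Sum.inl a) (Sum.inr j) = 1 - 2 * ((m : ℝ) + n - 2) := by
  have : ¬(a.val ≤ 1 ∧ j.val = 0) := by omega
  simp [seidelII, seidelS, this]

theorem seidelII_inr_inr (b j : Fin n) :
    seidelII m n (Sum.inr b) (Sum.inr j) = if b = j then 0 else 1 - 2 * (m : ℝ) := by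
  simp [seidelII, seidelS]

theorem seidelII_mulVec_single_inl_sub_single_inl {i j : Fin m} (hij : i ≠ j)
    (hi : 2 ≤ i.val) (hj : 2 ≤ j.val) :
    (seidelII m n).mulVec (Pi.single (Sum.inl i) (1:ℝ) - Pi.single (Sum.inl j) (1:ℝ)) =
      (2 * (n:ℝ) - 1) • (Pi.single (Sum.inl i) (1:ℝ) - Pi.single (Sum.inl j) (1:ℝ)) := by
  refine Matrix.mulVec_single_sub_single_eq_smul (Sum.inl_injective.ne hij) ?_ ?_ ?_
  · simp [seidelII_inl_inl_of_two_le, hi, hj, hij]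
  · simp [seidelII_inl_inl_of_two_le, hi, hj, hij.symm]
  · rintro (a | b) hai haj
    · simp_all [seidelII_inl_inl_of_two_le]
    · simp [seidelII_inr_inl_of_two_le, hi, hj]

theorem seidelII_mulVec_single_inr_sub_single_inr {i j : Fin n} (hij : i ≠ j)
    (hi : i.val ≠ 0) (hj : j.val ≠ 0) :
    (seidelII m n).mulVec (Pi.single (Sum.inr i) (1:ℝ) - Pi.single (Sum.inr j) (1:ℝ)) =
      (2 * (m:ℝ) - 1) • (Pi.single (Sum.inr i) (1:ℝ) - Pi.single (Sum.inr j) (1:ℝ)) := by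
  refine Matrix.mulVec_single_sub_single_eq_smul (Sum.inr_injective.ne hij) ?_ ?_ ?_
  · simp [seidelII_inr_inr, hij]
  · simp [seidelII_inr_inr, hij.symm]
  · rintro (a | b) hai haj
    · simp [seidelII_inl_inr_of_ne_zero, hi, hj]
    · simp_all [seidelII_inr_inr]

theorem sub_three_le_rootMultiplicity_seidelII (hm : 3 ≤ m) :
    m - 3 ≤ (seidelII m n).charpoly.rootMultiplicity (2 * (n:ℝ) - 1) := by
  let f : Fin (m - 3) → Fin m ⊕ Fin n := fun t ↦ Sum.inl ⟨t + 3, by omega⟩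
  have hf : Function.Injective f := fun s t hst ↦ by
    simpa [f, Fin.ext_iff] using hst
  have hp : ∀ t, f t ≠ Sum.inl ⟨2, by omega⟩ := fun t ↦ by simp [f, Fin.ext_iff]
  simpa using (seidelII m n).card_le_rootMultiplicity_charpoly _
    (linearIndependent_single_sub_single hf hp) fun t ↦
      seidelII_mulVec_single_inl_sub_single_inl (by simp [Fin.ext_iff]) (by simp) le_rfl

theorem sub_two_le_rootMultiplicity_seidelII (hn : 2 ≤ n) :
    n - 2 ≤ (seidelII m n).charpoly.rootMultiplicity (2 * (m:ℝ) - 1) := by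
  let f : Fin (n - 2) → Fin m ⊕ Fin n := fun t ↦ Sum.inr ⟨t + 2, by omega⟩
  have hf : Function.Injective f := fun s t hst ↦ by
    simpa [f, Fin.ext_iff] using hst
  have hp : ∀ t, f t ≠ Sum.inr ⟨1, by omega⟩ := fun t ↦ by simp [f, Fin.ext_iff]
  simpa using (seidelII m n).card_le_rootMultiplicity_charpoly _
    (linearIndependent_single_sub_single hf hp) fun t ↦
      seidelII_mulVec_single_inr_sub_single_inr (by simp [Fin.ext_iff]) (by simp) one_ne_zero

end SeidelII

theorem stmt7 (m n : ℕ) (hm : 3 ≤ m) (hn : 2 ≤ n) :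
    (∀ i j : Fin m, i ≠ j → 2 ≤ i.val → 2 ≤ j.val →
      (seidelII m n).mulVec
          (Pi.single (Sum.inl i) (1:ℝ) - Pi.single (Sum.inl j) (1:ℝ)) =
        (2*(n:ℝ) - 1) • (Pi.single (Sum.inl i) (1:ℝ) - Pi.single (Sum.inl j) (1:ℝ))) ∧
    (∀ i j : Fin n, i ≠ j → i.val ≠ 0 → j.val ≠ 0 →
      (seidelII m n).mulVec
          (Pi.single (Sum.inr i) (1:ℝ) - Pi.single (Sum.inr j) (1:ℝ)) =
        (2*(m:ℝ) - 1) • (Pi.single (Sum.inr i) (1:ℝ) - Pi.single (Sum.inr j) (1:ℝ))) ∧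
    m - 3 ≤ (seidelII m n).charpoly.rootMultiplicity (2*(n:ℝ) - 1) ∧
    n - 2 ≤ (seidelII m n).charpoly.rootMultiplicity (2*(m:ℝ) - 1) :=
  ⟨fun _ _ ↦ seidelII_mulVec_single_inl_sub_single_inl,
    fun _ _ ↦ seidelII_mulVec_single_inr_sub_single_inr,
    sub_three_le_rootMultiplicity_seidelII hm, sub_two_le_rootMultiplicity_seidelII hn⟩
end

section
/- Let m, n ≥ 3 be integers. The Type-I hyperedge-deleted Seidel matrix S_I(m,n) has exactly one negative eigenvalue, and its remaining m+n-1 eigenvalues (counted with multiplicity) are all positive. -/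
open Polynomial Matrix

/-!
On the hyperplane `∑ xᵢ = 0` the quadratic form of `S_I(m,n)` is positive definite: writing `P` for
the sum of the coordinates in the first block, the constant blocks of `S(m,n)` contribute
`(2m+2n-8) P² ≥ 0`, the zero diagonal contributes `(2n-1)` resp. `(2m-1)` times the squared norms of
the two blocks, and the six entries raised by the deletion contribute at least `-2 ∑ xᵢ²`.
In an orthonormal eigenbasis, two eigenvalues `λᵢ, λⱼ ≤ 0` would make the form nonpositive on a
nonzero vector of `span {vᵢ, vⱼ}` lying in that hyperplane, so at most one eigenvalue is `≤ 0`.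
As the diagonal vanishes, the eigenvalues sum to zero, which forces the exceptional one to be
negative.
-/
open Finset

lemma exists_ne_zero_mul_add_mul_eq_zero (p q : ℝ) :
    ∃ a b : ℝ, (a, b) ≠ 0 ∧ a * p + b * q = 0 := by
  by_cases h : (p, q) = 0
  · simp only [Prod.mk_eq_zero] at h
    exact ⟨1, 0, by simp, by simp [h.1, h.2]⟩
  · exact ⟨q, -p, by simpa [Prod.mk_eq_zero, and_comm] using h, by ring⟩

section WeightedSumOfSquares

variable {k : Type*} [Fintype k] [DecidableEq k]

lemma subsingleton_nonpos_of_pos_on_hyperplane (f c : k → ℝ)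
    (hpos : ∀ y ≠ 0, c ⬝ᵥ y = 0 → 0 < ∑ i, f i * y i ^ 2) : {i | f i ≤ 0}.Subsingleton := by
  intro i (hi : f i ≤ 0) j (hj : f j ≤ 0)
  by_contra hij
  obtain ⟨a, b, hab, hc⟩ := exists_ne_zero_mul_add_mul_eq_zero (c i) (c j)
  set y : k → ℝ := Pi.single i a + Pi.single j b
  have hyi : y i = a := by simp [y, hij]
  have hyj : y j = b := by simp [y, Ne.symm hij]
  have hy : y ≠ 0 := fun h => hab (by simp [← hyi, ← hyj, h])
  have hcy : c ⬝ᵥ y = 0 := by simp [y, dotProduct_add, dotProduct_single, ← hc, mul_comm]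
  have hsum : ∑ t, f t * y t ^ 2 = f i * a ^ 2 + f j * b ^ 2 := by
    rw [Fintype.sum_eq_add i j hij (fun t ht => by simp [y, ht.1, ht.2]), hyi, hyj]
  have := hpos y hy hcy
  rw [hsum] at this
  nlinarith [mul_nonpos_of_nonpos_of_nonneg hi (sq_nonneg a),
    mul_nonpos_of_nonpos_of_nonneg hj (sq_nonneg b)]

lemma card_neg_eq_one_of_sum_eq_zero [Nontrivial k] (f : k → ℝ)
    (hf : {i | f i ≤ 0}.Subsingleton) (hsum : ∑ i, f i = 0) :
    #{i | f i < 0} = 1 ∧ #{i | 0 < f i} = Fintype.card k - 1 := by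
  obtain ⟨i₀, hi₀⟩ : ∃ i₀, f i₀ ≤ 0 := by
    by_contra! h
    exact (Finset.sum_pos (fun i _ => h i) univ_nonempty).ne' hsum
  have hpos : ∀ j ≠ i₀, 0 < f j := fun j hj => not_le.1 fun h => hj (hf h hi₀)
  have hneg : f i₀ < 0 := by
    obtain ⟨j, hj⟩ := exists_ne i₀
    have : 0 < ∑ j ∈ univ.erase i₀, f j :=
      Finset.sum_pos (fun j hj => hpos j (ne_of_mem_erase hj)) ⟨j, mem_erase.2 ⟨hj, mem_univ j⟩⟩
    rw [← add_sum_erase _ _ (mem_univ i₀)] at hsum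
    linarith
  have hneg_iff : ∀ i, f i < 0 ↔ i = i₀ :=
    fun i => ⟨fun h => by_contra fun hi => (hpos i hi).not_gt h, fun h => h ▸ hneg⟩
  have hpos_iff : ∀ i, 0 < f i ↔ i ≠ i₀ :=
    fun i => ⟨fun h hi => (hi ▸ hneg).not_gt h, hpos i⟩
  simp [hneg_iff, hpos_iff, filter_eq', filter_ne', card_univ]

end WeightedSumOfSquares

namespace Matrix.IsHermitian

variable {k : Type*} [Fintype k] [DecidableEq k] {A : Matrix k k ℝ}

lemma dotProduct_mulVec_eq_sum_eigenvalues (hA : A.IsHermitian) (x : k → ℝ) :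
    x ⬝ᵥ (A *ᵥ x) =
      ∑ i, hA.eigenvalues i * ((star hA.eigenvectorUnitary : Matrix k k ℝ) *ᵥ x) i ^ 2 := by
  have hUt : (star hA.eigenvectorUnitary : Matrix k k ℝ) =
      (hA.eigenvectorUnitary : Matrix k k ℝ)ᵀ := by
    simp [star_eq_conjTranspose]
  conv_lhs => rw [hA.spectral_theorem, Unitary.conjStarAlgAut_apply]
  rw [← mulVec_mulVec, ← mulVec_mulVec, dotProduct_mulVec, ← mulVec_transpose, ← hUt]
  simp [dotProduct, mulVec_diagonal, sq, mul_left_comm]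

lemma subsingleton_nonpos_eigenvalues (hA : A.IsHermitian) (c : k → ℝ)
    (hpos : ∀ x ≠ 0, c ⬝ᵥ x = 0 → 0 < x ⬝ᵥ (A *ᵥ x)) :
    {i | hA.eigenvalues i ≤ 0}.Subsingleton := by
  set U : Matrix k k ℝ := ↑hA.eigenvectorUnitary
  have hUU : star U * U = 1 := Unitary.coe_star_mul_self _
  have hUt : star U = Uᵀ := by simp [star_eq_conjTranspose]
  refine subsingleton_nonpos_of_pos_on_hyperplane _ (star U *ᵥ c) fun y hy hcy => ?_
  have hx : U *ᵥ y ≠ 0 := fun h =>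
    hy (by simpa [mulVec_mulVec, hUU] using congrArg (star U *ᵥ ·) h)
  have hcx : c ⬝ᵥ (U *ᵥ y) = 0 := by rwa [dotProduct_mulVec, ← mulVec_transpose, ← hUt]
  have := hpos _ hx hcx
  rwa [hA.dotProduct_mulVec_eq_sum_eigenvalues, mulVec_mulVec, hUU, one_mulVec] at this

lemma card_neg_roots_charpoly_eq_one [Nontrivial k] (hA : A.IsHermitian) (c : k → ℝ)
    (hpos : ∀ x ≠ 0, c ⬝ᵥ x = 0 → 0 < x ⬝ᵥ (A *ᵥ x)) (htrace : A.trace = 0) :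
    (A.charpoly.roots.filter (fun x => x < 0)).card = 1 ∧
      (A.charpoly.roots.filter (fun x => 0 < x)).card = Fintype.card k - 1 := by
  have hsum : ∑ i, hA.eigenvalues i = 0 := by simpa [hA.trace_eq_sum_eigenvalues] using htrace
  simp only [hA.roots_charpoly_eq_eigenvalues, Multiset.filter_map, Multiset.card_map]
  exact card_neg_eq_one_of_sum_eq_zero _ (hA.subsingleton_nonpos_eigenvalues c hpos) hsum

end Matrix.IsHermitian

lemma dotProduct_mulVec_eq_of_offDiag {k : Type*} [Fintype k] [DecidableEq k] {A : Matrix k k ℝ}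
    (f : k → k → ℝ) (hA : ∀ i j, A i j = if i = j then 0 else f i j) (x : k → ℝ) :
    x ⬝ᵥ (A *ᵥ x) = ∑ i, ∑ j, x i * f i j * x j - ∑ i, f i i * x i ^ 2 := by
  have h : ∀ i j, x i * (A i j * x j) =
      x i * f i j * x j - if i = j then f i i * x i ^ 2 else 0 := by
    intro i j
    rcases eq_or_ne i j with rfl | hij <;> simp [*] <;> ring
  simp only [dotProduct, mulVec, mul_sum, h, sum_sub_distrib, sum_ite_eq, mem_univ, if_true]

lemma seidelI_isSymm (m n : ℕ) : (seidelI m n).IsSymm := by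
  ext (a | a) (b | b) <;>
    simp only [transpose_apply, seidelI, seidelS, Sum.inl.injEq, Sum.inr.injEq, reduceCtorEq,
      eq_comm, and_comm, or_comm]

lemma trace_seidelI (m n : ℕ) : (seidelI m n).trace = 0 := by
  simp [trace, seidelI, seidelS, Fintype.sum_sum_type,
    show ∀ a : ℕ, ¬(a = 0 ∧ a = 1 ∨ a = 1 ∧ a = 0) by omega]

lemma dotProduct_seidelS_mulVec (m n : ℕ) (x : Fin m ⊕ Fin n → ℝ) :
    x ⬝ᵥ (seidelS m n *ᵥ x) =
      (1 - 2 * n) * ((∑ a, x (.inl a)) ^ 2 - ∑ a, x (.inl a) ^ 2) +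
      (1 - 2 * m) * ((∑ b, x (.inr b)) ^ 2 - ∑ b, x (.inr b) ^ 2) +
      2 * (5 - 2 * m - 2 * n) * (∑ a, x (.inl a)) * ∑ b, x (.inr b) := by
  rw [dotProduct_mulVec_eq_of_offDiag (A := seidelS m n) _ fun i j => rfl]
  simp only [Fintype.sum_sum_type]
  simp only [← mul_sum, ← sum_mul, sum_add_distrib]
  ring

lemma dotProduct_seidelI_mulVec {m n : ℕ} (hm : 0 < m) (hn : 1 < n) (x : Fin m ⊕ Fin n → ℝ) :
    x ⬝ᵥ (seidelI m n *ᵥ x) = x ⬝ᵥ (seidelS m n *ᵥ x) +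
      4 * (x (.inl ⟨0, hm⟩) * (x (.inr ⟨0, by omega⟩) + x (.inr ⟨1, hn⟩)) +
        x (.inr ⟨0, by omega⟩) * x (.inr ⟨1, hn⟩)) := by
  set l : Fin m ⊕ Fin n := .inl ⟨0, hm⟩
  set r₀ : Fin m ⊕ Fin n := .inr ⟨0, by omega⟩
  set r₁ : Fin m ⊕ Fin n := .inr ⟨1, hn⟩
  have hI : seidelI m n = seidelS m n + (2 : ℝ) • (single l r₀ 1 + single r₀ l 1 +
      single l r₁ 1 + single r₁ l 1 + single r₀ r₁ 1 + single r₁ r₀ 1) := by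
    ext (a | a) (b | b) <;> simp [l, r₀, r₁, seidelI, seidelS, single_apply, Fin.ext_iff]
    all_goals split_ifs <;> first | ring1 | (exfalso; omega)
  simp only [hI, add_mulVec, smul_mulVec, single_mulVec_eq, dotProduct_add, dotProduct_smul,
    dotProduct_single, smul_eq_mul]
  ring

lemma dotProduct_seidelI_mulVec_pos {m n : ℕ} (hm : 2 ≤ m) (hn : 2 ≤ n) {x : Fin m ⊕ Fin n → ℝ}
    (hx : x ≠ 0) (hsum : 1 ⬝ᵥ x = 0) : 0 < x ⬝ᵥ (seidelI m n *ᵥ x) := by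
  rw [dotProduct_seidelI_mulVec (by omega) hn, dotProduct_seidelS_mulVec]
  set t := x (.inl ⟨0, by omega⟩)
  set q₀ := x (.inr ⟨0, by omega⟩)
  set q₁ := x (.inr ⟨1, hn⟩)
  set P := ∑ a, x (.inl a)
  set Sp := ∑ a, x (.inl a) ^ 2
  set Sq := ∑ b, x (.inr b) ^ 2
  have hQ : ∑ b, x (.inr b) = -P := by
    rw [one_dotProduct, Fintype.sum_sum_type] at hsum
    linarith
  have ht : t ^ 2 ≤ Sp :=
    single_le_sum (f := fun a => x (.inl a) ^ 2) (fun _ _ => sq_nonneg _) (mem_univ _)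
  have hq : q₀ ^ 2 + q₁ ^ 2 ≤ Sq := by
    have hne : (⟨0, by omega⟩ : Fin n) ≠ ⟨1, hn⟩ := by simp
    calc q₀ ^ 2 + q₁ ^ 2 = ∑ b ∈ {⟨0, by omega⟩, ⟨1, hn⟩}, x (.inr b) ^ 2 := by rw [sum_pair hne]
      _ ≤ Sq := sum_le_sum_of_subset_of_nonneg (subset_univ _) fun _ _ _ => sq_nonneg _
  have hS : 0 < Sp + Sq := by
    simpa [dotProduct, Fintype.sum_sum_type, ← sq] using dotProduct_star_self_pos_iff.2 hx
  have hm' : (2 : ℝ) ≤ m := by exact_mod_cast hm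
  have hn' : (2 : ℝ) ≤ n := by exact_mod_cast hn
  rw [hQ]
  -- `4 (t (q₀ + q₁) + q₀ q₁) = 2 (t + q₀ + q₁)² - 2 (t² + q₀² + q₁²)`
  nlinarith [sq_nonneg (t + q₀ + q₁), mul_nonneg (by linarith : (0 : ℝ) ≤ m + n - 4) (sq_nonneg P),
    mul_nonneg (by linarith : (0 : ℝ) ≤ n - 2) (ht.trans' (sq_nonneg t)),
    mul_nonneg (by linarith : (0 : ℝ) ≤ m - 2) (hq.trans' (by positivity))]

theorem stmt8 (m n : ℕ) (hm : 3 ≤ m) (hn : 3 ≤ n) :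
    ((seidelI m n).charpoly.roots.filter (fun x => x < 0)).card = 1 ∧
    ((seidelI m n).charpoly.roots.filter (fun x => 0 < x)).card = m + n - 1 := by
  have hA : (seidelI m n).IsHermitian := isHermitian_iff_isSymm.2 (seidelI_isSymm m n)
  have : Nontrivial (Fin m ⊕ Fin n) := ⟨.inl ⟨0, by omega⟩, .inr ⟨0, by omega⟩, Sum.inl_ne_inr⟩
  simpa using hA.card_neg_roots_charpoly_eq_one 1
    (fun _ hx hsum => dotProduct_seidelI_mulVec_pos (by omega) (by omega) hx hsum)
    (trace_seidelI m n)
end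

section
/- Let m, n ≥ 3 be integers. The Type-II hyperedge-deleted Seidel matrix S_II(m,n) has exactly one negative eigenvalue, and its remaining m+n-1 eigenvalues (counted with multiplicity) are all positive. -/
/-!
Write `u`, `v` for the indicators of the two blocks, `e` for the indicator of the deleted hyperedge
`{inl 0, inl 1, inr 0}` and `J` for the all-ones matrix. Comparing entries,
`S_II = D + (2m-4) u uᵀ + (2n-4) v vᵀ + 2 e eᵀ - (2m+2n-5) J` with a positive diagonal `D`,
so the quadratic form of `S_II` is positive definite on the hyperplane `x ⬝ᵥ 1 = 0`.
Any two orthonormal eigenvectors span a plane meeting that hyperplane nontrivially, so at most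
one eigenvalue is `≤ 0`. On the other hand `S_II` has zero diagonal and the negative entry `1 - 2m`
inside the second block, so it is not positive semidefinite and some eigenvalue is negative.
-/

open Polynomial Matrix

namespace Matrix.IsHermitian

variable {ι : Type*} [Fintype ι] [DecidableEq ι] {A : Matrix ι ι ℝ}

lemma eigenvectorBasis_dotProduct (hA : A.IsHermitian) (i j : ι) :
    ⇑(hA.eigenvectorBasis i) ⬝ᵥ ⇑(hA.eigenvectorBasis j) = if i = j then 1 else 0 := by
  have h := orthonormal_iff_ite.mp hA.eigenvectorBasis.orthonormal j i
  rw [EuclideanSpace.inner_eq_star_dotProduct, star_trivial] at h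
  simpa only [eq_comm] using h

lemma eq_of_eigenvalues_nonpos (hA : A.IsHermitian) (w : ι → ℝ)
    (hpos : ∀ x, x ≠ 0 → w ⬝ᵥ x = 0 → 0 < x ⬝ᵥ (A *ᵥ x)) {i j : ι}
    (hi : hA.eigenvalues i ≤ 0) (hj : hA.eigenvalues j ≤ 0) : i = j := by
  by_contra hij
  set v := fun k => ⇑(hA.eigenvectorBasis k)
  have hv := hA.eigenvectorBasis_dotProduct
  have hform : ∀ a b : ℝ, (a • v i + b • v j) ⬝ᵥ (A *ᵥ (a • v i + b • v j)) =
      a ^ 2 * hA.eigenvalues i + b ^ 2 * hA.eigenvalues j := by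
    intro a b
    simp only [v, mulVec_add, mulVec_smul, mulVec_eigenvectorBasis, dotProduct_add,
      add_dotProduct, dotProduct_smul, smul_dotProduct, hv, if_neg hij, if_neg (Ne.symm hij),
      if_true, smul_eq_mul]
    ring
  have hnorm : ∀ a b : ℝ, (a • v i + b • v j) ⬝ᵥ (a • v i + b • v j) = a ^ 2 + b ^ 2 := by
    intro a b
    simp only [v, dotProduct_add, add_dotProduct, dotProduct_smul, smul_dotProduct, hv,
      if_neg hij, if_neg (Ne.symm hij), if_true, smul_eq_mul]
    ring
  obtain ⟨a, b, hab, hw⟩ : ∃ a b : ℝ, (a, b) ≠ 0 ∧ w ⬝ᵥ (a • v i + b • v j) = 0 := by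
    by_cases hwi : w ⬝ᵥ v i = 0
    · exact ⟨1, 0, by simp, by simp [hwi]⟩
    · refine ⟨w ⬝ᵥ v j, -(w ⬝ᵥ v i), by simp [hwi], ?_⟩
      simp only [dotProduct_add, dotProduct_smul, smul_eq_mul]
      ring
  have hne : a • v i + b • v j ≠ 0 := by
    intro h
    have h0 := hnorm a b
    rw [h, zero_dotProduct] at h0
    have ha : a = 0 := by nlinarith [sq_nonneg a, sq_nonneg b]
    have hb : b = 0 := by nlinarith [sq_nonneg a, sq_nonneg b]
    exact hab (by simp [ha, hb])
  have h := hpos _ hne hw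
  rw [hform] at h
  nlinarith [sq_nonneg a, sq_nonneg b]

lemma exists_eigenvalues_neg (hA : A.IsHermitian) (h : ¬ A.PosSemidef) :
    ∃ i, hA.eigenvalues i < 0 := by
  by_contra! h'
  exact h (hA.posSemidef_iff_eigenvalues_nonneg.mpr h')

theorem card_roots_charpoly_filter_of_pos_on_hyperplane (hA : A.IsHermitian) (w : ι → ℝ)
    (hpos : ∀ x, x ≠ 0 → w ⬝ᵥ x = 0 → 0 < x ⬝ᵥ (A *ᵥ x)) (hA' : ¬ A.PosSemidef) :
    (A.charpoly.roots.filter (· < 0)).card = 1 ∧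
      (A.charpoly.roots.filter (0 < ·)).card = Fintype.card ι - 1 := by
  obtain ⟨i₀, hi₀⟩ := hA.exists_eigenvalues_neg hA'
  have hunique : ∀ i, hA.eigenvalues i ≤ 0 → i = i₀ := fun i hi =>
    hA.eq_of_eigenvalues_nonpos w hpos hi hi₀.le
  have hneg : Finset.univ.filter (fun i => hA.eigenvalues i < 0) = {i₀} := by
    ext i
    simp only [Finset.mem_filter, Finset.mem_univ, true_and, Finset.mem_singleton]
    exact ⟨fun hi => hunique i hi.le, fun h => h ▸ hi₀⟩
  have hposi : Finset.univ.filter (fun i => 0 < hA.eigenvalues i) = Finset.univ.erase i₀ := by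
    ext i
    simp only [Finset.mem_filter, Finset.mem_univ, true_and, Finset.mem_erase, and_true]
    refine ⟨fun hi h => ?_, fun h => lt_of_not_ge fun hi => h (hunique i hi)⟩
    subst h
    exact hi.not_gt hi₀
  simp only [hA.roots_charpoly_eq_eigenvalues, RCLike.ofReal_real_eq_id, Function.id_comp,
    Multiset.filter_map, Multiset.card_map]
  exact ⟨congrArg Finset.card hneg,
    (congrArg Finset.card hposi).trans (Finset.card_erase_of_mem (Finset.mem_univ _))⟩

end Matrix.IsHermitian

lemma Matrix.dotProduct_mulVec_vecMulVec_self {ι : Type*} [Fintype ι] (a x : ι → ℝ) :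
    x ⬝ᵥ (vecMulVec a a *ᵥ x) = (a ⬝ᵥ x) ^ 2 := by
  rw [vecMulVec_mulVec, op_smul_eq_smul, dotProduct_smul, smul_eq_mul, dotProduct_comm, sq]

lemma Matrix.dotProduct_diagonal_mulVec {ι : Type*} [Fintype ι] [DecidableEq ι] (d x : ι → ℝ) :
    x ⬝ᵥ (diagonal d *ᵥ x) = ∑ i, d i * x i ^ 2 := by
  simp only [dotProduct, mulVec_diagonal]
  exact Finset.sum_congr rfl fun i _ => by ring

noncomputable def deletedHyperedge (m n : ℕ) : Fin m ⊕ Fin n → ℝ :=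
  Sum.elim (fun a => if a.val ≤ 1 then 1 else 0) (fun b => if b.val = 0 then 1 else 0)

noncomputable def seidelIIDiag (m n : ℕ) : Fin m ⊕ Fin n → ℝ :=
  Sum.elim (fun _ => 2 * (n : ℝ) - 1) (fun _ => 2 * (m : ℝ) - 1) - (2 : ℝ) • deletedHyperedge m n

lemma seidelII_eq (m n : ℕ) :
    seidelII m n = diagonal (seidelIIDiag m n)
      + (2 * (m : ℝ) - 4) • vecMulVec (Sum.elim 1 0) (Sum.elim 1 0)
      + (2 * (n : ℝ) - 4) • vecMulVec (Sum.elim 0 1) (Sum.elim 0 1)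
      + (2 : ℝ) • vecMulVec (deletedHyperedge m n) (deletedHyperedge m n)
      - (2 * (m : ℝ) + 2 * n - 5) • vecMulVec 1 1 := by
  ext (a | a) (b | b) <;>
    simp only [seidelII, seidelS, seidelIIDiag, deletedHyperedge, Matrix.add_apply,
      Matrix.sub_apply, Matrix.smul_apply, vecMulVec_apply, diagonal_apply, Sum.elim_inl,
      Sum.elim_inr, Pi.sub_apply, Pi.smul_apply, Pi.one_apply, Pi.zero_apply, smul_eq_mul,
      Sum.inl.injEq, Sum.inr.injEq, Fin.ext_iff, reduceCtorEq] <;>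
    split_ifs <;> first | (exfalso; omega) | ring

lemma isHermitian_seidelII (m n : ℕ) : (seidelII m n).IsHermitian := by
  rw [isHermitian_iff_isSymm]
  refine IsSymm.ext fun i j => ?_
  rcases i with a | a <;> rcases j with b | b <;>
    simp only [seidelII, seidelS, Sum.inl.injEq, Sum.inr.injEq, reduceCtorEq, Fin.ext_iff] <;>
    split_ifs <;> first | rfl | (exfalso; omega)

lemma seidelII_dotProduct_mulVec (m n : ℕ) (x : Fin m ⊕ Fin n → ℝ) :
    x ⬝ᵥ (seidelII m n *ᵥ x) = ∑ i, seidelIIDiag m n i * x i ^ 2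
      + (2 * (m : ℝ) - 4) * (Sum.elim 1 0 ⬝ᵥ x) ^ 2 + (2 * (n : ℝ) - 4) * (Sum.elim 0 1 ⬝ᵥ x) ^ 2
      + 2 * (deletedHyperedge m n ⬝ᵥ x) ^ 2 - (2 * (m : ℝ) + 2 * n - 5) * (1 ⬝ᵥ x) ^ 2 := by
  simp only [seidelII_eq, add_mulVec, sub_mulVec, smul_mulVec, dotProduct_add, dotProduct_sub,
    dotProduct_smul, smul_eq_mul, dotProduct_mulVec_vecMulVec_self, dotProduct_diagonal_mulVec]

lemma seidelIIDiag_pos {m n : ℕ} (hm : 2 ≤ m) (hn : 2 ≤ n) (i : Fin m ⊕ Fin n) :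
    0 < seidelIIDiag m n i := by
  have hm' : (2 : ℝ) ≤ m := by exact_mod_cast hm
  have hn' : (2 : ℝ) ≤ n := by exact_mod_cast hn
  rcases i with a | b <;>
    simp only [seidelIIDiag, deletedHyperedge, Pi.sub_apply, Pi.smul_apply, Sum.elim_inl,
      Sum.elim_inr, smul_eq_mul] <;>
    split_ifs <;> linarith

lemma seidelII_dotProduct_mulVec_pos {m n : ℕ} (hm : 2 ≤ m) (hn : 2 ≤ n)
    (x : Fin m ⊕ Fin n → ℝ) (hx : x ≠ 0) (hsum : 1 ⬝ᵥ x = 0) :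
    0 < x ⬝ᵥ (seidelII m n *ᵥ x) := by
  have hm' : (2 : ℝ) ≤ m := by exact_mod_cast hm
  have hn' : (2 : ℝ) ≤ n := by exact_mod_cast hn
  obtain ⟨i, hi⟩ := Function.ne_iff.mp hx
  have hdiag : 0 < ∑ i, seidelIIDiag m n i * x i ^ 2 :=
    Finset.sum_pos' (fun j _ => mul_nonneg (seidelIIDiag_pos hm hn j).le (sq_nonneg _))
      ⟨i, Finset.mem_univ _, mul_pos (seidelIIDiag_pos hm hn i) (sq_pos_of_ne_zero hi)⟩
  rw [seidelII_dotProduct_mulVec, hsum]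
  nlinarith [sq_nonneg (Sum.elim 1 0 ⬝ᵥ x), sq_nonneg (Sum.elim 0 1 ⬝ᵥ x),
    sq_nonneg (deletedHyperedge m n ⬝ᵥ x)]

lemma not_posSemidef_seidelII {m n : ℕ} (hm : 1 ≤ m) (hn : 2 ≤ n) :
    ¬ (seidelII m n).PosSemidef := by
  intro h
  have hm' : (1 : ℝ) ≤ m := by exact_mod_cast hm
  have h' := h.dotProduct_mulVec_nonneg
    (Pi.single (Sum.inr ⟨0, by omega⟩) 1 + Pi.single (Sum.inr ⟨1, hn⟩) 1)
  simp only [star_trivial, mulVec_add, mulVec_single_one, dotProduct_add, add_dotProduct,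
    single_dotProduct, col_apply, seidelII, seidelS, ↓reduceIte, Sum.inr.injEq, Fin.mk.injEq,
    one_ne_zero, zero_ne_one, one_mul, zero_add, add_zero, nonneg_add_self_iff, sub_nonneg] at h'
  linarith

theorem stmt9 (m n : ℕ) (hm : 3 ≤ m) (hn : 3 ≤ n) :
    ((seidelII m n).charpoly.roots.filter (fun x => x < 0)).card = 1 ∧
    ((seidelII m n).charpoly.roots.filter (fun x => 0 < x)).card = m + n - 1 := by
  have h := (isHermitian_seidelII m n).card_roots_charpoly_filter_of_pos_on_hyperplane 1
    (seidelII_dotProduct_mulVec_pos (by omega) (by omega))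
    (not_posSemidef_seidelII (by omega) (by omega))
  simpa only [Fintype.card_sum, Fintype.card_fin] using h
end

section
/- Let m, n ≥ 3 be integers. Then 2m-3 is an eigenvalue of the Type-I hyperedge-deleted Seidel matrix S_I(m,n); equivalently, the linear factor (X - (2m-3)) divides the characteristic polynomial of S_I(m,n). -/
open Polynomial Matrix

lemma eval_charpoly' {k : Type*} [Fintype k] [DecidableEq k]
    (M : Matrix k k ℝ) (μ : ℝ) :
    M.charpoly.eval μ = (Matrix.diagonal (fun _ => μ) - M).det := by
  rw [Matrix.charpoly, ← Polynomial.coe_evalRingHom, RingHom.map_det]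
  congr 1
  ext i j
  by_cases h : i = j <;>
    simp [Matrix.charmatrix_apply, Matrix.diagonal_apply, h]

theorem stmt10 (m n : ℕ) (hm : 3 ≤ m) (hn : 3 ≤ n) :
    (2*(m:ℝ) - 3) ∈ (seidelI m n).charpoly.roots ∧
    (X - C (2*(m:ℝ) - 3)) ∣ (seidelI m n).charpoly := by
  have hμ : ((seidelI m n).charpoly).IsRoot (2*(m:ℝ) - 3) := by
    rw [Polynomial.IsRoot, eval_charpoly']
    rw [← Matrix.exists_mulVec_eq_zero_iff]
    set b0 : Fin n := ⟨0, by omega⟩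
    set b1 : Fin n := ⟨1, by omega⟩
    refine ⟨Pi.single (Sum.inr b0 : Fin m ⊕ Fin n) 1 - Pi.single (Sum.inr b1) 1, ?_, ?_⟩
    · intro h
      have := congrFun h (Sum.inr b0)
      have hne : (Sum.inr b0 : Fin m ⊕ Fin n) ≠ Sum.inr b1 := by
        simp [b0, b1, Fin.ext_iff]
      simp [Pi.single_apply, hne] at this
    · rw [Matrix.mulVec_sub, Matrix.mulVec_single, Matrix.mulVec_single]
      funext i
      have hb0 : (b0 : Fin n).val = 0 := rfl
      have hb1 : (b1 : Fin n).val = 1 := rfl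
      have hb01 : b0 ≠ b1 := by simp [b0, b1, Fin.ext_iff]
      rcases i with a | c
      · simp [Matrix.diagonal_apply, seidelI, seidelS, hb0, hb1]
      · by_cases h0 : c = b0
        · subst h0
          simp [Matrix.diagonal_apply, seidelI, seidelS, hb0, hb1, hb01, Fin.ext_iff]
          ring
        · by_cases h1 : c = b1
          · subst h1
            simp [Matrix.diagonal_apply, seidelI, seidelS, hb0, hb1, hb01,
              Ne.symm hb01, Fin.ext_iff]
            ring
          · have hc0 : c.val ≠ 0 := by simpa [b0, Fin.ext_iff] using h0
            have hc1 : c.val ≠ 1 := by simpa [b1, Fin.ext_iff] using h1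
            simp [Matrix.diagonal_apply, seidelI, seidelS, hb0, hb1, h0, h1,
              hc0, hc1, Fin.ext_iff]
  constructor
  · rw [Polynomial.mem_roots ((seidelI m n).charpoly_monic.ne_zero)]
    exact hμ
  · exact Polynomial.dvd_iff_isRoot.mpr hμ
end

section
/- Let m, n ≥ 3 be integers. The smallest eigenvalue of the Seidel matrix S(m,n) of C^3_{m,n} is strictly smaller than the smallest eigenvalue of the Type-II hyperedge-deleted Seidel matrix S_II(m,n). -/
open Polynomial Matrix

section AuxSeidel

lemma charpoly_root_iff' {k : Type*} [Fintype k] [DecidableEq k] (M : Matrix k k ℝ) (t : ℝ) :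
    t ∈ M.charpoly.roots ↔ ∃ v : k → ℝ, v ≠ 0 ∧ M.mulVec v = t • v := by
  have hev : M.charpoly.eval t = (Matrix.diagonal (fun _ : k => t) - M).det := by
    have h1 : M.charpoly.eval t = (Polynomial.evalRingHom t) M.charpoly := rfl
    rw [h1, Matrix.charpoly, RingHom.map_det]
    congr 1
    ext i j
    by_cases h : i = j
    · subst h
      simp [Matrix.charmatrix_apply_eq, Matrix.diagonal_apply_eq]
    · simp [Matrix.charmatrix_apply_ne _ _ _ h, Matrix.diagonal_apply_ne _ h]
  rw [Polynomial.mem_roots', Polynomial.IsRoot, hev]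
  have hdet := Matrix.exists_mulVec_eq_zero_iff
    (M := Matrix.diagonal (fun _ : k => t) - M)
  constructor
  · rintro ⟨-, hd⟩
    obtain ⟨v, hv, hmv⟩ := hdet.mpr hd
    refine ⟨v, hv, ?_⟩
    rw [Matrix.sub_mulVec] at hmv
    have h2 : ∀ i, t * v i - (M.mulVec v) i = 0 := by
      intro i
      have := congrFun hmv i
      simpa [Matrix.mulVec_diagonal] using this
    funext i
    have := h2 i
    simp only [Pi.smul_apply, smul_eq_mul]
    linarith
  · rintro ⟨v, hv, hmv⟩
    refine ⟨(Matrix.charpoly_monic M).ne_zero, hdet.mp ⟨v, hv, ?_⟩⟩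
    rw [Matrix.sub_mulVec]
    funext i
    have := congrFun hmv i
    simp only [Pi.smul_apply, smul_eq_mul] at this
    simp [Matrix.mulVec_diagonal, this]

lemma sum_ite_diag' {k : Type*} [Fintype k] [DecidableEq k] (i : k) (g : k → ℝ) :
    ∑ j, (if i = j then (0:ℝ) else g j) = (∑ j, g j) - g i := by
  have h : ∀ j ∈ Finset.univ, (if i = j then (0:ℝ) else g j)
      = g j - (if i = j then g j else 0) := by
    intro j _; split <;> ring
  rw [Finset.sum_congr rfl h, Finset.sum_sub_distrib, Finset.sum_ite_eq]
  simp

lemma mulVecS (m n : ℕ) (x : Fin m → ℝ) (y : Fin n → ℝ) :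
    (seidelS m n).mulVec (Sum.elim x y)
      = Sum.elim
          (fun i => (1 - 2*(n:ℝ)) * ((∑ j, x j) - x i)
            + (1 - 2*((m:ℝ) + (n:ℝ) - 2)) * (∑ j, y j))
          (fun i => (1 - 2*((m:ℝ) + (n:ℝ) - 2)) * (∑ j, x j)
            + (1 - 2*(m:ℝ)) * ((∑ j, y j) - y i)) := by
  funext i
  cases i with
  | inl i =>
    simp only [Matrix.mulVec, dotProduct, Fintype.sum_sum_type, Sum.elim_inl, Sum.elim_inr]
    have h1 : ∀ j : Fin m, seidelS m n (Sum.inl i) (Sum.inl j) * x j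
        = (if i = j then (0:ℝ) else (1 - 2*(n:ℝ)) * x j) := by
      intro j
      by_cases h : i = j <;> simp [seidelS, h]
    have h2 : ∀ j : Fin n, seidelS m n (Sum.inl i) (Sum.inr j) * y j
        = (1 - 2*((m:ℝ) + (n:ℝ) - 2)) * y j := by
      intro j; simp [seidelS]
    rw [Finset.sum_congr rfl (fun j _ => h1 j), Finset.sum_congr rfl (fun j _ => h2 j)]
    rw [sum_ite_diag' i (fun j => (1 - 2*(n:ℝ)) * x j)]
    rw [← Finset.mul_sum, ← Finset.mul_sum]
    ring
  | inr i =>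
    simp only [Matrix.mulVec, dotProduct, Fintype.sum_sum_type, Sum.elim_inl, Sum.elim_inr]
    have h1 : ∀ j : Fin m, seidelS m n (Sum.inr i) (Sum.inl j) * x j
        = (1 - 2*((m:ℝ) + (n:ℝ) - 2)) * x j := by
      intro j; simp [seidelS]
    have h2 : ∀ j : Fin n, seidelS m n (Sum.inr i) (Sum.inr j) * y j
        = (if i = j then (0:ℝ) else (1 - 2*(m:ℝ)) * y j) := by
      intro j
      by_cases h : i = j <;> simp [seidelS, h]
    rw [Finset.sum_congr rfl (fun j _ => h1 j), Finset.sum_congr rfl (fun j _ => h2 j)]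
    rw [sum_ite_diag' i (fun j => (1 - 2*(m:ℝ)) * y j)]
    rw [← Finset.mul_sum, ← Finset.mul_sum]
    ring

lemma quadS (m n : ℕ) (x : Fin m → ℝ) (y : Fin n → ℝ) :
    (Sum.elim x y) ⬝ᵥ (seidelS m n).mulVec (Sum.elim x y)
      = (1 - 2*(n:ℝ)) * ((∑ j, x j)^2 - ∑ j, (x j)^2)
        + 2 * (1 - 2*((m:ℝ) + (n:ℝ) - 2)) * (∑ j, x j) * (∑ j, y j)
        + (1 - 2*(m:ℝ)) * ((∑ j, y j)^2 - ∑ j, (y j)^2) := by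
  rw [mulVecS]
  simp only [dotProduct, Fintype.sum_sum_type, Sum.elim_inl, Sum.elim_inr]
  have h1 : ∀ j : Fin m, x j * ((1 - 2*(n:ℝ)) * ((∑ j, x j) - x j)
      + (1 - 2*((m:ℝ) + (n:ℝ) - 2)) * (∑ j, y j))
      = ((1 - 2*(n:ℝ)) * (∑ j, x j) + (1 - 2*((m:ℝ) + (n:ℝ) - 2)) * (∑ j, y j)) * x j
        - (1 - 2*(n:ℝ)) * (x j)^2 := by
    intro j; ring
  have h2 : ∀ j : Fin n, y j * ((1 - 2*((m:ℝ) + (n:ℝ) - 2)) * (∑ j, x j)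
      + (1 - 2*(m:ℝ)) * ((∑ j, y j) - y j))
      = ((1 - 2*((m:ℝ) + (n:ℝ) - 2)) * (∑ j, x j) + (1 - 2*(m:ℝ)) * (∑ j, y j)) * y j
        - (1 - 2*(m:ℝ)) * (y j)^2 := by
    intro j; ring
  rw [Finset.sum_congr rfl (fun j _ => h1 j), Finset.sum_congr rfl (fun j _ => h2 j),
    Finset.sum_sub_distrib, Finset.sum_sub_distrib, ← Finset.mul_sum, ← Finset.mul_sum,
    ← Finset.mul_sum, ← Finset.mul_sum]
  ring

/-- indicator of the three special vertices -/
noncomputable def vnd (m n : ℕ) : Fin m ⊕ Fin n → ℝ :=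
  Sum.elim (fun i => if i.val ≤ 1 then 1 else 0) (fun j => if j.val = 0 then 1 else 0)

noncomputable def Emat (m n : ℕ) : Matrix (Fin m ⊕ Fin n) (Fin m ⊕ Fin n) ℝ :=
  fun i j => if i = j then 0 else 2 * vnd m n i * vnd m n j

lemma seidelII_split (m n : ℕ) : seidelII m n = seidelS m n + Emat m n := by
  funext i j
  rcases i with a | a <;> rcases j with b | b <;>
    simp only [seidelII, seidelS, Emat, vnd, Matrix.add_apply, Sum.elim_inl, Sum.elim_inr,
      Sum.inl.injEq, Sum.inr.injEq, reduceCtorEq] <;>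
    split_ifs <;>
    simp_all [Fin.ext_iff] <;> first | omega | ring

lemma sum_indic01 {m : ℕ} (i0 i1 : Fin m) (h0 : i0.val = 0) (h1 : i1.val = 1)
    (x : Fin m → ℝ) :
    ∑ j : Fin m, (if j.val ≤ 1 then (1:ℝ) else 0) * x j = x i0 + x i1 := by
  have h : ∀ j ∈ Finset.univ, (if j.val ≤ 1 then (1:ℝ) else 0) * x j
      = if j.val ≤ 1 then x j else 0 := by
    intro j _; split <;> ring
  rw [Finset.sum_congr rfl h, ← Finset.sum_filter]
  have hf : Finset.univ.filter (fun j : Fin m => j.val ≤ 1) = {i0, i1} := by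
    ext j
    simp [Fin.ext_iff, h0, h1]
    omega
  rw [hf, Finset.sum_pair (by simp [Fin.ext_iff, h0, h1] : i0 ≠ i1)]

lemma sum_indic0 {n : ℕ} (j0 : Fin n) (hj : j0.val = 0) (y : Fin n → ℝ) :
    ∑ j : Fin n, (if j.val = 0 then (1:ℝ) else 0) * y j = y j0 := by
  have h : ∀ j ∈ Finset.univ, (if j.val = 0 then (1:ℝ) else 0) * y j
      = if j.val = 0 then y j else 0 := by
    intro j _; split <;> ring
  rw [Finset.sum_congr rfl h, ← Finset.sum_filter]
  have hf : Finset.univ.filter (fun j : Fin n => j.val = 0) = {j0} := by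
    ext j
    simp [Fin.ext_iff, hj]
  rw [hf, Finset.sum_singleton]

lemma quadE (m n : ℕ) (i0 i1 : Fin m) (j0 : Fin n)
    (h0 : i0.val = 0) (h1 : i1.val = 1) (hj : j0.val = 0)
    (x : Fin m → ℝ) (y : Fin n → ℝ) :
    (Sum.elim x y) ⬝ᵥ (Emat m n).mulVec (Sum.elim x y)
      = 2 * (x i0 + x i1 + y j0)^2
        - 2 * ((x i0)^2 + (x i1)^2 + (y j0)^2) := by
  set z := Sum.elim x y with hz
  set v := vnd m n with hv
  have hV : ∑ j, v j * z j = x i0 + x i1 + y j0 := by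
    rw [Fintype.sum_sum_type]
    simp only [hv, hz, vnd, Sum.elim_inl, Sum.elim_inr]
    rw [sum_indic01 i0 i1 h0 h1 x, sum_indic0 j0 hj y]
  have hW : ∑ j, (v j * z j)^2 = (x i0)^2 + (x i1)^2 + (y j0)^2 := by
    rw [Fintype.sum_sum_type]
    simp only [hv, hz, vnd, Sum.elim_inl, Sum.elim_inr]
    have h1' : ∀ j : Fin m, ((if j.val ≤ 1 then (1:ℝ) else 0) * x j)^2
        = (if j.val ≤ 1 then (1:ℝ) else 0) * (fun j => (x j)^2) j := by
      intro j; by_cases h : j.val ≤ 1 <;> simp [h]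
    have h2' : ∀ j : Fin n, ((if j.val = 0 then (1:ℝ) else 0) * y j)^2
        = (if j.val = 0 then (1:ℝ) else 0) * (fun j => (y j)^2) j := by
      intro j; by_cases h : j.val = 0 <;> simp [h]
    rw [Finset.sum_congr rfl (fun j _ => h1' j), Finset.sum_congr rfl (fun j _ => h2' j),
      sum_indic01 i0 i1 h0 h1 (fun j => (x j)^2), sum_indic0 j0 hj (fun j => (y j)^2)]
  have hrow : ∀ i, (Emat m n).mulVec z i
      = 2 * v i * (∑ j, v j * z j) - 2 * (v i * z i) * v i := by
    intro i
    simp only [Matrix.mulVec, dotProduct, Emat]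
    have h : ∀ j ∈ Finset.univ, (if i = j then (0:ℝ) else 2 * vnd m n i * vnd m n j) * z j
        = (if i = j then (0:ℝ) else 2 * v i * (v j * z j)) := by
      intro j _; rw [hv]; split <;> ring
    rw [Finset.sum_congr rfl h, sum_ite_diag' i (fun j => 2 * v i * (v j * z j)),
      ← Finset.mul_sum]
    ring
  have hdot : z ⬝ᵥ (Emat m n).mulVec z
      = 2 * (∑ j, v j * z j)^2 - 2 * ∑ j, (v j * z j)^2 := by
    simp only [dotProduct]
    rw [Finset.sum_congr rfl (fun i _ => by rw [hrow i])]
    have h : ∀ i ∈ Finset.univ, z i * (2 * v i * (∑ j, v j * z j) - 2 * (v i * z i) * v i)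
        = 2 * (∑ j, v j * z j) * (v i * z i) - 2 * (v i * z i)^2 := by
      intro i _; ring
    rw [Finset.sum_congr rfl h, Finset.sum_sub_distrib, ← Finset.mul_sum, ← Finset.mul_sum]
    ring
  rw [hdot, hV, hW]

lemma P1key (rm rn αp βp μ s t X Y : ℝ) (hrm : 3 ≤ rm) (hrn : 3 ≤ rn)
    (hα : αp = (1-2*rn)*(rm-1) - μ) (hβ : βp = (1-2*rm)*(rn-1) - μ)
    (hαpos : 0 < αp) (hβpos : 0 < βp)
    (hprod : αp*βp = (5-2*rm-2*rn)^2*rm*rn)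
    (hX : s^2 ≤ rm*X) (hY : t^2 ≤ rn*Y) :
    μ*(X+Y) ≤ (1-2*rn)*(s^2-X) + 2*(5-2*rm-2*rn)*s*t + (1-2*rm)*(t^2-Y) := by
  have hμ : μ = (1-2*rn)*(rm-1) - αp := by linarith
  subst hμ
  have hApos : 0 < αp + rm*(2*rn-1) := by nlinarith
  have hBpos : 0 < βp + rn*(2*rm-1) := by nlinarith
  have key : rm*rn*αp*(((1-2*rn)*(s^2-X) + 2*(5-2*rm-2*rn)*s*t + (1-2*rm)*(t^2-Y))
        - ((1-2*rn)*(rm-1) - αp)*(X+Y))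
      = (αp + rm*(2*rn-1))*rn*αp*(rm*X - s^2)
        + (βp + rn*(2*rm-1))*rm*αp*(rn*Y - t^2)
        + rn*(αp*s + (5-2*rm-2*rn)*rm*t)^2 := by
    linear_combination rm*t^2*hprod - rm*rn*αp*Y*hβ
  have h1 : 0 ≤ (αp + rm*(2*rn-1))*rn*αp*(rm*X - s^2) := by
    apply mul_nonneg
    apply mul_nonneg (mul_nonneg hApos.le (by linarith)) hαpos.le
    linarith
  have h2 : 0 ≤ (βp + rn*(2*rm-1))*rm*αp*(rn*Y - t^2) := by
    apply mul_nonneg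
    apply mul_nonneg (mul_nonneg hBpos.le (by linarith)) hαpos.le
    linarith
  have h3 : 0 ≤ rn*(αp*s + (5-2*rm-2*rn)*rm*t)^2 := by positivity
  have hM : 0 < rm*rn*αp :=
    mul_pos (mul_pos (by linarith) (by linarith)) hαpos
  nlinarith [key, h1, h2, h3, hM]

lemma mu_exists (rm rn : ℝ) (hrm : 3 ≤ rm) (hrn : 3 ≤ rn) :
    ∃ μ : ℝ, 0 < (1-2*rn)*(rm-1) - μ ∧ 0 < (1-2*rm)*(rn-1) - μ ∧
      ((1-2*rn)*(rm-1) - μ)*((1-2*rm)*(rn-1) - μ) = (5-2*rm-2*rn)^2*rm*rn := by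
  have hC7 : 5-2*rm-2*rn ≤ -7 := by linarith
  have hCsq : 49 ≤ (5-2*rm-2*rn)^2 := by nlinarith
  have hpos4 : (0:ℝ) < 4*(5-2*rm-2*rn)^2*rm*rn := by
    nlinarith [mul_le_mul_of_nonneg_right hCsq
      (mul_pos (show (0:ℝ) < rm by linarith) (show (0:ℝ) < rn by linarith)).le]
  set g : ℝ := (1-2*rn)*(rm-1) - (1-2*rm)*(rn-1) with hg
  set Δ : ℝ := g^2 + 4*(5-2*rm-2*rn)^2*rm*rn with hΔ
  have hΔpos : 0 < Δ := by nlinarith [sq_nonneg g]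
  have hs := Real.sq_sqrt hΔpos.le
  have hsp := Real.sqrt_pos.mpr hΔpos
  refine ⟨((1-2*rn)*(rm-1) + (1-2*rm)*(rn-1) - Real.sqrt Δ)/2, ?_, ?_, ?_⟩
  · have hgr : 0 < Real.sqrt Δ + g := by
      by_contra hng
      push_neg at hng
      have h1 : Real.sqrt Δ ≤ -g := by linarith
      have h2 : Real.sqrt Δ * Real.sqrt Δ ≤ (-g) * (-g) :=
        mul_le_mul h1 h1 (Real.sqrt_nonneg _) (by linarith)
      nlinarith [hs]
    linarith [hgr]
  · have hgr : 0 < Real.sqrt Δ - g := by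
      by_contra hng
      push_neg at hng
      have h1 : Real.sqrt Δ ≤ g := by linarith
      have h2 : Real.sqrt Δ * Real.sqrt Δ ≤ g * g :=
        mul_le_mul h1 h1 (Real.sqrt_nonneg _) (by linarith)
      nlinarith [hs]
    linarith [hgr]
  · linear_combination (1/4) * hs

set_option maxHeartbeats 1000000 in
lemma P2key (rm rn αp βp : ℝ) (hrm : 3 ≤ rm) (hrn : 3 ≤ rn)
    (hαpos : 0 < αp) (hβpos : 0 < βp)
    (hprod : αp*βp = (5-2*rm-2*rn)^2*rm*rn)
    (p q x0 x1 y0 : ℝ)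
    (hne : ¬(p = 0 ∧ q = 0 ∧ x0 = 0 ∧ x1 = 0 ∧ y0 = 0)) :
    0 < (αp + rm*(2*rn-1))*((x0-p)^2 + (x1-p)^2) + (βp + rn*(2*rm-1))*(y0-q)^2
        + αp*rm*p^2 + 2*(5-2*rm-2*rn)*rm*rn*(p*q) + βp*rn*q^2
        + 4*(x0*x1 + x0*y0 + x1*y0) := by
  have hrm0 : (0:ℝ) < rm := by linarith
  have hrn0 : (0:ℝ) < rn := by linarith
  set A := αp + rm*(2*rn-1) with hA
  set B := βp + rn*(2*rm-1) with hB
  have hApos : 0 < A := by rw [hA]; nlinarith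
  have hBpos : 0 < B := by rw [hB]; nlinarith
  have hA2 : 2 < A := by rw [hA]; nlinarith
  have hC7 : 5-2*rm-2*rn ≤ -7 := by linarith
  have hfact : 0 < βp*rn - 4 - 2*(5-2*rm-2*rn)*rm*rn - 2*rm - 4*rn := by
    nlinarith [mul_pos hβpos hrn0,
      mul_nonneg (show (0:ℝ) ≤ rm*rn - 9 by nlinarith)
        (show (0:ℝ) ≤ 2*rm+2*rn-5 by linarith)]
  have hE : 0 < A*B*βp*rn - 4*(A*B) - 2*A*B*(5-2*rm-2*rn)*rm*rn - 2*αp*rm*B - 4*A*βp*rn := by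
    have hiden : A*B*βp*rn - 4*(A*B) - 2*A*B*(5-2*rm-2*rn)*rm*rn - 2*αp*rm*B - 4*A*βp*rn
        = 2*rm*B*(A - αp) + 4*rn*A*(B - βp)
          + A*B*(βp*rn - 4 - 2*(5-2*rm-2*rn)*rm*rn - 2*rm - 4*rn) := by ring
    have h1 : A - αp = rm*(2*rn-1) := by rw [hA]; ring
    have h2 : B - βp = rn*(2*rm-1) := by rw [hB]; ring
    have t1 : 0 < 2*rm*B*(A - αp) := by
      rw [h1]; apply mul_pos (by positivity); nlinarith
    have t2 : 0 < 4*rn*A*(B - βp) := by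
      rw [h2]; apply mul_pos (by positivity); nlinarith
    have t3 : 0 < A*B*(βp*rn - 4 - 2*(5-2*rm-2*rn)*rm*rn - 2*rm - 4*rn) :=
      mul_pos (mul_pos hApos hBpos) hfact
    linarith [hiden, t1, t2, t3]
  have hid : 2*A*B*βp^2*rn^2 *
      (A*((x0-p)^2 + (x1-p)^2) + B*(y0-q)^2
        + αp*rm*p^2 + 2*(5-2*rm-2*rn)*rm*rn*(p*q) + βp*rn*q^2
        + 4*(x0*x1 + x0*y0 + x1*y0))
      = A*B*βp^2*rn^2*(A-2)*(x0-x1)^2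
        + 2*A*βp^2*rn^2*(B*(y0-q)+4*((x0+x1)/2))^2
        + 2*A*B*βp*rn*(βp*rn*q + (5-2*rm-2*rn)*rm*rn*p + 4*((x0+x1)/2))^2
        + B*(2*A*βp*rn*((x0+x1)/2 - p) + 4*(5-2*rm-2*rn)*rm*rn*((x0+x1)/2))^2
        + 8*βp*rn*(A*B*βp*rn - 4*(A*B) - 2*A*B*(5-2*rm-2*rn)*rm*rn - 2*αp*rm*B - 4*A*βp*rn)
            *((x0+x1)/2)^2 := by
    rw [hA, hB]
    linear_combination (2*(αp + rm*(2*rn-1))*(βp + rn*(2*rm-1))*βp*rn^2*rm*p^2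
      + 16*(βp + rn*(2*rm-1))*rm*rn*((x0+x1)/2)^2) * hprod
  have n1 : 0 ≤ A*B*βp^2*rn^2*(A-2)*(x0-x1)^2 := by
    apply mul_nonneg _ (sq_nonneg _)
    apply mul_nonneg _ (by linarith)
    positivity
  have n2 : 0 ≤ 2*A*βp^2*rn^2*(B*(y0-q)+4*((x0+x1)/2))^2 := by positivity
  have n3 : 0 ≤ 2*A*B*βp*rn*(βp*rn*q + (5-2*rm-2*rn)*rm*rn*p + 4*((x0+x1)/2))^2 := by positivity
  have n4 : 0 ≤ B*(2*A*βp*rn*((x0+x1)/2 - p) + 4*(5-2*rm-2*rn)*rm*rn*((x0+x1)/2))^2 := by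
    positivity
  have n5 : 0 ≤ 8*βp*rn*(A*B*βp*rn - 4*(A*B) - 2*A*B*(5-2*rm-2*rn)*rm*rn - 2*αp*rm*B - 4*A*βp*rn)
      *((x0+x1)/2)^2 :=
    mul_nonneg (mul_nonneg (by positivity) hE.le) (sq_nonneg _)
  have hpos : 0 < A*B*βp^2*rn^2*(A-2)*(x0-x1)^2
        + 2*A*βp^2*rn^2*(B*(y0-q)+4*((x0+x1)/2))^2
        + 2*A*B*βp*rn*(βp*rn*q + (5-2*rm-2*rn)*rm*rn*p + 4*((x0+x1)/2))^2
        + B*(2*A*βp*rn*((x0+x1)/2 - p) + 4*(5-2*rm-2*rn)*rm*rn*((x0+x1)/2))^2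
        + 8*βp*rn*(A*B*βp*rn - 4*(A*B) - 2*A*B*(5-2*rm-2*rn)*rm*rn - 2*αp*rm*B - 4*A*βp*rn)
            *((x0+x1)/2)^2 := by
    by_cases hw : x0 + x1 = 0
    · have hw2 : (x0+x1)/2 = 0 := by rw [hw]; ring
      by_cases hp : p = 0
      · by_cases hq : q = 0
        · by_cases hy : y0 = 0
          · have hx0 : x0 ≠ 0 := by
              rcases not_and_or.mp hne with h | h
              · exact absurd hp h
              rcases not_and_or.mp h with h | h
              · exact absurd hq h
              rcases not_and_or.mp h with h | h
              · exact h
              rcases not_and_or.mp h with h | h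
              · intro h0; exact h (by linarith)
              · exact absurd hy h
            have hd : x0 - x1 ≠ 0 := by intro h0; apply hx0; linarith
            have s1 : 0 < A*B*βp^2*rn^2*(A-2)*(x0-x1)^2 := by
              apply mul_pos _ (lt_of_le_of_ne (sq_nonneg _) (Ne.symm (pow_ne_zero _ hd)))
              apply mul_pos _ (by linarith)
              positivity
            exact add_pos_of_pos_of_nonneg
              (add_pos_of_pos_of_nonneg
                (add_pos_of_pos_of_nonneg (add_pos_of_pos_of_nonneg s1 n2) n3) n4) n5
          · have s2 : 0 < 2*A*βp^2*rn^2*(B*(y0-q)+4*((x0+x1)/2))^2 := by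
              have hne2 : B*(y0-q)+4*((x0+x1)/2) ≠ 0 := by
                rw [hw2, hq]
                simpa using mul_ne_zero hBpos.ne' hy
              apply mul_pos (by positivity)
                (lt_of_le_of_ne (sq_nonneg _) (Ne.symm (pow_ne_zero _ hne2)))
            exact add_pos_of_pos_of_nonneg
              (add_pos_of_pos_of_nonneg
                (add_pos_of_pos_of_nonneg (add_pos_of_nonneg_of_pos n1 s2) n3) n4) n5
        · have s3 : 0 < 2*A*B*βp*rn*(βp*rn*q + (5-2*rm-2*rn)*rm*rn*p + 4*((x0+x1)/2))^2 := by
            have hne2 : βp*rn*q + (5-2*rm-2*rn)*rm*rn*p + 4*((x0+x1)/2) ≠ 0 := by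
              rw [hw2, hp]
              simpa using mul_ne_zero (mul_ne_zero hβpos.ne' hrn0.ne') hq
            apply mul_pos (by positivity)
              (lt_of_le_of_ne (sq_nonneg _) (Ne.symm (pow_ne_zero _ hne2)))
          exact add_pos_of_pos_of_nonneg
            (add_pos_of_pos_of_nonneg
              (add_pos_of_nonneg_of_pos (add_nonneg n1 n2) s3) n4) n5
      · have s4 : 0 < B*(2*A*βp*rn*((x0+x1)/2 - p) + 4*(5-2*rm-2*rn)*rm*rn*((x0+x1)/2))^2 := by
          have hne2 : 2*A*βp*rn*((x0+x1)/2 - p) + 4*(5-2*rm-2*rn)*rm*rn*((x0+x1)/2) ≠ 0 := by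
            rw [hw2]
            have h2A : 2*A*βp*rn ≠ 0 := by positivity
            simpa using mul_ne_zero h2A (neg_ne_zero.mpr hp)
          apply mul_pos hBpos
            (lt_of_le_of_ne (sq_nonneg _) (Ne.symm (pow_ne_zero _ hne2)))
        exact add_pos_of_pos_of_nonneg
          (add_pos_of_nonneg_of_pos (add_nonneg (add_nonneg n1 n2) n3) s4) n5
    · have hw2 : (x0+x1)/2 ≠ 0 := by
        intro h0; apply hw; field_simp at h0; linarith
      have s5 : 0 < 8*βp*rn*(A*B*βp*rn - 4*(A*B) - 2*A*B*(5-2*rm-2*rn)*rm*rn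
          - 2*αp*rm*B - 4*A*βp*rn)*((x0+x1)/2)^2 := by
        apply mul_pos (mul_pos (by positivity) hE)
          (lt_of_le_of_ne (sq_nonneg _) (Ne.symm (pow_ne_zero _ hw2)))
      exact add_pos_of_nonneg_of_pos (add_nonneg (add_nonneg (add_nonneg n1 n2) n3) n4) s5
  rw [← hid] at hpos
  have hK : 0 < 2*A*B*βp^2*rn^2 := by positivity
  by_contra hg
  push_neg at hg
  have h2 := mul_nonpos_iff.mpr (Or.inr ⟨hg, hK.le⟩)
  rw [mul_comm] at h2
  linarith [hpos, h2]

end AuxSeidel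

set_option maxHeartbeats 1600000 in
theorem stmt12 (m n : ℕ) (hm : 3 ≤ m) (hn : 3 ≤ n) :
    ∃ μ : ℝ, μ ∈ (seidelS m n).charpoly.roots ∧
      (∀ x ∈ (seidelS m n).charpoly.roots, μ ≤ x) ∧
      (∀ y ∈ (seidelII m n).charpoly.roots, μ < y) := by
  have hrm : (3:ℝ) ≤ (m:ℝ) := by exact_mod_cast hm
  have hrn : (3:ℝ) ≤ (n:ℝ) := by exact_mod_cast hn
  have hm0 : (0:ℝ) < (m:ℝ) := by linarith
  have hn0 : (0:ℝ) < (n:ℝ) := by linarith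
  obtain ⟨μ, hαpos, hβpos, hprod⟩ := mu_exists (m:ℝ) (n:ℝ) hrm hrn
  refine ⟨μ, ?_, ?_, ?_⟩
  · -- μ is a root of charpoly of S
    rw [charpoly_root_iff']
    obtain ⟨i0, hi0⟩ : ∃ i : Fin m, i.val = 0 := ⟨⟨0, by omega⟩, rfl⟩
    refine ⟨Sum.elim (fun _ : Fin m => (5-2*(m:ℝ)-2*(n:ℝ))*(n:ℝ))
      (fun _ : Fin n => μ - (1-2*(n:ℝ))*((m:ℝ)-1)), ?_, ?_⟩
    · intro h0
      have h1 := congrFun h0 (Sum.inl i0)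
      simp only [Sum.elim_inl, Pi.zero_apply] at h1
      have h2 : (5-2*(m:ℝ)-2*(n:ℝ))*(n:ℝ) < 0 :=
        mul_neg_of_neg_of_pos (by linarith) hn0
      exact h2.ne h1
    · rw [mulVecS]
      funext i
      cases i with
      | inl i =>
        simp only [Sum.elim_inl, Sum.elim_inr, Pi.smul_apply, smul_eq_mul]
        rw [Finset.sum_const, Finset.sum_const, Finset.card_univ, Finset.card_univ,
          Fintype.card_fin, Fintype.card_fin, nsmul_eq_mul, nsmul_eq_mul]
        ring
      | inr i =>
        simp only [Sum.elim_inl, Sum.elim_inr, Pi.smul_apply, smul_eq_mul]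
        rw [Finset.sum_const, Finset.sum_const, Finset.card_univ, Finset.card_univ,
          Fintype.card_fin, Fintype.card_fin, nsmul_eq_mul, nsmul_eq_mul]
        linear_combination -hprod
  · -- μ is the smallest root
    intro x hx
    obtain ⟨v, hv, heig⟩ := (charpoly_root_iff' _ _).mp hx
    have hveq : v = Sum.elim (v ∘ Sum.inl) (v ∘ Sum.inr) := by
      funext i; cases i <;> rfl
    set xv := v ∘ Sum.inl with hxv
    set yv := v ∘ Sum.inr with hyv
    have hq := quadS m n xv yv
    rw [← hveq] at hq
    have hdot1 : v ⬝ᵥ (seidelS m n).mulVec v = x * (v ⬝ᵥ v) := by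
      rw [heig, dotProduct_smul, smul_eq_mul]
    have hvv : v ⬝ᵥ v = (∑ j, (xv j)^2) + (∑ j, (yv j)^2) := by
      rw [hveq]
      simp only [dotProduct, Fintype.sum_sum_type, Sum.elim_inl, Sum.elim_inr, pow_two]
    have hXnn : 0 ≤ ∑ j, (xv j)^2 := Finset.sum_nonneg fun j _ => sq_nonneg _
    have hYnn : 0 ≤ ∑ j, (yv j)^2 := Finset.sum_nonneg fun j _ => sq_nonneg _
    have hXY : 0 < (∑ j, (xv j)^2) + (∑ j, (yv j)^2) := by
      obtain ⟨i, hi⟩ := Function.ne_iff.mp hv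
      cases i with
      | inl i =>
        have hi' : xv i ≠ 0 := hi
        have h1 : (xv i)^2 ≤ ∑ j, (xv j)^2 :=
          Finset.single_le_sum (f := fun j => _ ^ 2) (fun j _ => sq_nonneg _) (Finset.mem_univ i)
        have h2 : 0 < (xv i)^2 := lt_of_le_of_ne (sq_nonneg _) (Ne.symm (pow_ne_zero _ hi'))
        linarith
      | inr i =>
        have hi' : yv i ≠ 0 := hi
        have h1 : (yv i)^2 ≤ ∑ j, (yv j)^2 :=
          Finset.single_le_sum (f := fun j => _ ^ 2) (fun j _ => sq_nonneg _) (Finset.mem_univ i)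
        have h2 : 0 < (yv i)^2 := lt_of_le_of_ne (sq_nonneg _) (Ne.symm (pow_ne_zero _ hi'))
        linarith
    have hXc : (∑ j, xv j)^2 ≤ (m:ℝ) * ∑ j, (xv j)^2 := by
      have h := sq_sum_le_card_mul_sum_sq (s := (Finset.univ : Finset (Fin m))) (f := xv)
      simpa using h
    have hYc : (∑ j, yv j)^2 ≤ (n:ℝ) * ∑ j, (yv j)^2 := by
      have h := sq_sum_le_card_mul_sum_sq (s := (Finset.univ : Finset (Fin n))) (f := yv)
      simpa using h
    have hP1 := P1key (m:ℝ) (n:ℝ) ((1-2*(n:ℝ))*((m:ℝ)-1) - μ) ((1-2*(m:ℝ))*((n:ℝ)-1) - μ)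
      μ (∑ j, xv j) (∑ j, yv j) (∑ j, (xv j)^2) (∑ j, (yv j)^2)
      hrm hrn rfl rfl hαpos hβpos hprod hXc hYc
    rw [hq, hvv] at hdot1
    by_contra hcon
    push_neg at hcon
    have h3 : 0 < (μ - x) * ((∑ j, (xv j)^2) + (∑ j, (yv j)^2)) :=
      mul_pos (by linarith) hXY
    linarith [hP1, hdot1, h3]
  · -- all roots of S_II are strictly larger
    intro yy hyy
    obtain ⟨v, hv, heig⟩ := (charpoly_root_iff' _ _).mp hyy
    obtain ⟨i0, hi0⟩ : ∃ i : Fin m, i.val = 0 := ⟨⟨0, by omega⟩, rfl⟩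
    obtain ⟨i1, hi1⟩ : ∃ i : Fin m, i.val = 1 := ⟨⟨1, by omega⟩, rfl⟩
    obtain ⟨j0, hj0⟩ : ∃ j : Fin n, j.val = 0 := ⟨⟨0, by omega⟩, rfl⟩
    have hveq : v = Sum.elim (v ∘ Sum.inl) (v ∘ Sum.inr) := by
      funext i; cases i <;> rfl
    set xv := v ∘ Sum.inl with hxv
    set yv := v ∘ Sum.inr with hyv
    have hqS := quadS m n xv yv
    have hqE := quadE m n i0 i1 j0 hi0 hi1 hj0 xv yv
    rw [← hveq] at hqS hqE
    have hsplit2 : v ⬝ᵥ (seidelII m n).mulVec v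
        = v ⬝ᵥ (seidelS m n).mulVec v + v ⬝ᵥ (Emat m n).mulVec v := by
      rw [seidelII_split, Matrix.add_mulVec, dotProduct_add]
    have hdot1 : v ⬝ᵥ (seidelII m n).mulVec v = yy * (v ⬝ᵥ v) := by
      rw [heig, dotProduct_smul, smul_eq_mul]
    have hvv : v ⬝ᵥ v = (∑ j, (xv j)^2) + (∑ j, (yv j)^2) := by
      rw [hveq]
      simp only [dotProduct, Fintype.sum_sum_type, Sum.elim_inl, Sum.elim_inr, pow_two]
    set s := ∑ j, xv j with hsdef
    set t := ∑ j, yv j with htdef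
    set X := ∑ j, (xv j)^2 with hXdef
    set Y := ∑ j, (yv j)^2 with hYdef
    set p := s / (m:ℝ) with hpdef
    set q := t / (n:ℝ) with hqdef
    have hs : s = (m:ℝ) * p := by rw [hpdef]; field_simp
    have ht : t = (n:ℝ) * q := by rw [hqdef]; field_simp
    have hXsum : ∑ j, (xv j - p)^2 = X - (m:ℝ)*p^2 := by
      have hpt : ∀ j ∈ Finset.univ, (xv j - p)^2 = (xv j)^2 - 2*p*xv j + p^2 :=
        fun j _ => by ring
      rw [Finset.sum_congr rfl hpt, Finset.sum_add_distrib, Finset.sum_sub_distrib,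
        ← Finset.mul_sum, Finset.sum_const, Finset.card_univ, Fintype.card_fin, nsmul_eq_mul,
        ← hXdef, ← hsdef, hs]
      ring
    have hYsum : ∑ j, (yv j - q)^2 = Y - (n:ℝ)*q^2 := by
      have hpt : ∀ j ∈ Finset.univ, (yv j - q)^2 = (yv j)^2 - 2*q*yv j + q^2 :=
        fun j _ => by ring
      rw [Finset.sum_congr rfl hpt, Finset.sum_add_distrib, Finset.sum_sub_distrib,
        ← Finset.mul_sum, Finset.sum_const, Finset.card_univ, Fintype.card_fin, nsmul_eq_mul,
        ← hYdef, ← htdef, ht]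
      ring
    have hne01 : i0 ≠ i1 := by
      intro h; rw [h] at hi0; omega
    have hslackX : (xv i0 - p)^2 + (xv i1 - p)^2 ≤ X - (m:ℝ)*p^2 := by
      rw [← hXsum]
      calc (xv i0 - p)^2 + (xv i1 - p)^2
          = ∑ j ∈ ({i0,i1} : Finset (Fin m)), (xv j - p)^2 := by
            rw [Finset.sum_pair hne01]
        _ ≤ ∑ j, (xv j - p)^2 := Finset.sum_le_sum_of_subset_of_nonneg
            (Finset.subset_univ _) (fun j _ _ => sq_nonneg _)
    have hslackY : (yv j0 - q)^2 ≤ Y - (n:ℝ)*q^2 := by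
      rw [← hYsum]
      exact Finset.single_le_sum (f := fun j => (yv j - q)^2) (fun j _ => sq_nonneg _)
        (Finset.mem_univ j0)
    have hXnn : 0 ≤ X := Finset.sum_nonneg fun j _ => sq_nonneg _
    have hYnn : 0 ≤ Y := Finset.sum_nonneg fun j _ => sq_nonneg _
    have hXY : 0 < X + Y := by
      obtain ⟨i, hi⟩ := Function.ne_iff.mp hv
      cases i with
      | inl i =>
        have hi' : xv i ≠ 0 := hi
        have h1 : (xv i)^2 ≤ ∑ j, (xv j)^2 :=
          Finset.single_le_sum (f := fun j => _ ^ 2) (fun j _ => sq_nonneg _) (Finset.mem_univ i)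
        have h2 : 0 < (xv i)^2 := lt_of_le_of_ne (sq_nonneg _) (Ne.symm (pow_ne_zero _ hi'))
        linarith [hXdef, hYdef]
      | inr i =>
        have hi' : yv i ≠ 0 := hi
        have h1 : (yv i)^2 ≤ ∑ j, (yv j)^2 :=
          Finset.single_le_sum (f := fun j => _ ^ 2) (fun j _ => sq_nonneg _) (Finset.mem_univ i)
        have h2 : 0 < (yv i)^2 := lt_of_le_of_ne (sq_nonneg _) (Ne.symm (pow_ne_zero _ hi'))
        linarith [hXdef, hYdef]
    have hform : yy * (X + Y) = (1 - 2*(n:ℝ)) * (s^2 - X)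
        + 2 * (1 - 2*((m:ℝ) + (n:ℝ) - 2)) * s * t + (1 - 2*(m:ℝ)) * (t^2 - Y)
        + (2 * (xv i0 + xv i1 + yv j0)^2
          - 2 * ((xv i0)^2 + (xv i1)^2 + (yv j0)^2)) := by
      rw [hsplit2, hqS, hqE, hvv] at hdot1
      linarith [hdot1]
    have hApos : (0:ℝ) < ((1-2*(n:ℝ))*((m:ℝ)-1) - μ) + (m:ℝ)*(2*(n:ℝ)-1) := by
      linarith [hαpos, mul_nonneg (show (0:ℝ) ≤ (m:ℝ) by linarith)
        (show (0:ℝ) ≤ 2*(n:ℝ)-1 by linarith)]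
    have hBpos : (0:ℝ) < ((1-2*(m:ℝ))*((n:ℝ)-1) - μ) + (n:ℝ)*(2*(m:ℝ)-1) := by
      linarith [hβpos, mul_nonneg (show (0:ℝ) ≤ (n:ℝ) by linarith)
        (show (0:ℝ) ≤ 2*(m:ℝ)-1 by linarith)]
    have hlt : μ * (X + Y) < yy * (X + Y) := by
      rw [hform]
      by_cases hall : p = 0 ∧ q = 0 ∧ xv i0 = 0 ∧ xv i1 = 0 ∧ yv j0 = 0
      · obtain ⟨hp0, hq0, h00, h10, h20⟩ := hall
        have hs0 : s = 0 := by rw [hs, hp0, mul_zero]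
        have ht0 : t = 0 := by rw [ht, hq0, mul_zero]
        rw [hs0, ht0, h00, h10, h20]
        have hor : 0 < X ∨ 0 < Y := by
          by_contra hc
          push_neg at hc
          obtain ⟨h1, h2⟩ := hc
          linarith
        rcases hor with hX | hY
        · linarith [mul_pos hApos hX, mul_nonneg hBpos.le hYnn]
        · linarith [mul_pos hBpos hY, mul_nonneg hApos.le hXnn]
      · have hP2 := P2key (m:ℝ) (n:ℝ) ((1-2*(n:ℝ))*((m:ℝ)-1) - μ) ((1-2*(m:ℝ))*((n:ℝ)-1) - μ)
          hrm hrn hαpos hβpos hprod p q (xv i0) (xv i1) (yv j0) hall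
        have e1 : 0 ≤ (((1-2*(n:ℝ))*((m:ℝ)-1) - μ) + (m:ℝ)*(2*(n:ℝ)-1))
            * ((X - (m:ℝ)*p^2) - ((xv i0 - p)^2 + (xv i1 - p)^2)) :=
          mul_nonneg hApos.le (by linarith)
        have e2 : 0 ≤ (((1-2*(m:ℝ))*((n:ℝ)-1) - μ) + (n:ℝ)*(2*(m:ℝ)-1))
            * ((Y - (n:ℝ)*q^2) - (yv j0 - q)^2) :=
          mul_nonneg hBpos.le (by linarith)
        rw [hs, ht]
        have hiden : ((1 - 2*(n:ℝ)) * (((m:ℝ)*p)^2 - X)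
            + 2 * (1 - 2*((m:ℝ) + (n:ℝ) - 2)) * ((m:ℝ)*p) * ((n:ℝ)*q)
            + (1 - 2*(m:ℝ)) * (((n:ℝ)*q)^2 - Y)
            + (2 * (xv i0 + xv i1 + yv j0)^2
              - 2 * ((xv i0)^2 + (xv i1)^2 + (yv j0)^2)))
            - μ * (X + Y)
            = ((((1-2*(n:ℝ))*((m:ℝ)-1) - μ) + (m:ℝ)*(2*(n:ℝ)-1))
                  *((xv i0 - p)^2 + (xv i1 - p)^2)
                + (((1-2*(m:ℝ))*((n:ℝ)-1) - μ) + (n:ℝ)*(2*(m:ℝ)-1))*(yv j0 - q)^2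
                + ((1-2*(n:ℝ))*((m:ℝ)-1) - μ)*(m:ℝ)*p^2
                + 2*(5-2*(m:ℝ)-2*(n:ℝ))*(m:ℝ)*(n:ℝ)*(p*q)
                + ((1-2*(m:ℝ))*((n:ℝ)-1) - μ)*(n:ℝ)*q^2
                + 4*(xv i0 * xv i1 + xv i0 * yv j0 + xv i1 * yv j0))
              + (((1-2*(n:ℝ))*((m:ℝ)-1) - μ) + (m:ℝ)*(2*(n:ℝ)-1))
                  * ((X - (m:ℝ)*p^2) - ((xv i0 - p)^2 + (xv i1 - p)^2))
              + (((1-2*(m:ℝ))*((n:ℝ)-1) - μ) + (n:ℝ)*(2*(m:ℝ)-1))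
                  * ((Y - (n:ℝ)*q^2) - (yv j0 - q)^2) := by ring
        linarith [hP2, e1, e2, hiden]
    by_contra hcon
    push_neg at hcon
    have h4 : 0 ≤ (μ - yy) * (X + Y) := mul_nonneg (by linarith) hXY.le
    linarith [hlt, h4]
end

section
/- Let m ≥ 2 and n ≥ 2 be integers. Then E_S(C^3_{m,n}) < E_S(C^3_{m+1,n}); that is, the sum of the absolute values of the eigenvalues of S(m,n) is strictly less than the sum of the absolute values of the eigenvalues of S(m+1,n). In particular, for fixed n the Seidel energy of C^3_{m,n} is strictly increasing in m. -/
/-!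
Adding `1 - 2n` and `1 - 2m` to the diagonal of `S(m,n)` makes all four blocks constant, so
`x • 1 - S(m,n)` is a diagonal matrix minus a rank-two matrix, and the matrix determinant lemma
reduces its determinant to a `2 × 2` one. Hence the spectrum is `2n - 1` with multiplicity `m - 1`, `2m - 1` with
multiplicity `n - 1`, and the two roots of a quadratic whose constant term is nonpositive for
`m, n ≥ 2`. These roots have opposite signs, so their absolute values add up to the square root of
the discriminant, giving
`E_S(C³_{m,n}) = (m - 1)(2n - 1) + (n - 1)(2m - 1) + √((m - n)² + 4mn(2m + 2n - 5)²)`,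
in which the first two terms and the radicand all grow with `m`.
-/

open Polynomial Matrix

/-- The two roots have opposite signs, so `|r| + |s| = r - s`. -/
lemma Polynomial.sum_abs_roots_mul_sub_C (α β γ : ℝ) (h : α * β ≤ γ) :
    (((X + C α) * (X + C β) - C γ).roots.map abs).sum = √((α - β) ^ 2 + 4 * γ) := by
  set δ := √((α - β) ^ 2 + 4 * γ)
  have hδ : δ ^ 2 = (α - β) ^ 2 + 4 * γ := Real.sq_sqrt (by nlinarith [sq_nonneg (α + β)])
  have hδ' : |α + β| ≤ δ := Real.abs_le_sqrt (by nlinarith)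
  have hr : 0 ≤ (-(α + β) + δ) / 2 := by linarith [le_abs_self (α + β)]
  have hs : (-(α + β) - δ) / 2 ≤ 0 := by linarith [neg_abs_le (α + β)]
  set r := (-(α + β) + δ) / 2
  set s := (-(α + β) - δ) / 2
  have hsum : C (α + β) = C (-(r + s)) := congrArg C (by ring)
  have hprod : C (α * β - γ) = C (r * s) := congrArg C (by linear_combination (1 / 4 : ℝ) * hδ)
  simp only [map_add, map_neg, map_mul, map_sub] at hsum hprod
  have hfactor : (X + C α) * (X + C β) - C γ = (X - C r) * (X - C s) := by
    linear_combination X * hsum + hprod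
  rw [hfactor, roots_mul (mul_ne_zero (X_sub_C_ne_zero _) (X_sub_C_ne_zero _)),
    roots_X_sub_C, roots_X_sub_C]
  simp only [Multiset.singleton_add, Multiset.map_cons, Multiset.map_singleton,
    Multiset.sum_cons, Multiset.sum_singleton]
  rw [abs_of_nonneg hr, abs_of_nonpos hs]
  ring

section TwoClass

variable {ι κ : Type*} [Fintype ι] [Fintype κ] [DecidableEq ι] [DecidableEq κ]

namespace Matrix

variable {K : Type*} [Field K]

def twoClassMatrix (a b c : K) : Matrix (ι ⊕ κ) (ι ⊕ κ) K :=
  of fun i j => if i = j then 0 else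
    Sum.elim (fun _ => Sum.elim (fun _ => a) fun _ => c)
      (fun _ => Sum.elim (fun _ => c) fun _ => b) i j

lemma scalar_sub_twoClassMatrix (a b c x : K) :
    scalar (ι ⊕ κ) x - twoClassMatrix a b c =
      diagonal (Sum.elim (fun _ => x + a) fun _ => x + b) -
        fromRows (replicateRow ι ![(1 : K), 0]) (replicateRow κ ![0, 1]) *
          fromCols (replicateCol ι ![a, c]) (replicateCol κ ![c, b]) := by
  ext (i | i) (j | j) <;>
  simp only [mul_apply, Fin.sum_univ_two, fromRows_apply_inl, fromRows_apply_inr,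
    fromCols_apply_inl, fromCols_apply_inr, replicateRow_apply, replicateCol_apply, sub_apply,
    scalar_apply, diagonal_apply, twoClassMatrix, of_apply] <;>
  simp <;> split_ifs <;> ring

lemma det_scalar_sub_twoClassMatrix (a b c x : K) (ha : x + a ≠ 0) (hb : x + b ≠ 0) :
    (x + a) * (x + b) * (scalar (ι ⊕ κ) x - twoClassMatrix a b c).det =
      (x + a) ^ Fintype.card ι * (x + b) ^ Fintype.card κ *
        ((x + a - Fintype.card ι * a) * (x + b - Fintype.card κ * b) -
          Fintype.card ι * Fintype.card κ * c ^ 2) := by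
  set d : ι ⊕ κ → K := Sum.elim (fun _ => x + a) fun _ => x + b
  have hd : ∀ i, d i ≠ 0 := by rintro (i | i) <;> assumption
  have hdet : (diagonal d).det = (x + a) ^ Fintype.card ι * (x + b) ^ Fintype.card κ := by
    simp [d, Fintype.prod_sum_type]
  have hinv : (diagonal d)⁻¹ = diagonal fun i => (d i)⁻¹ := by
    refine inv_eq_left_inv ?_
    rw [diagonal_mul_diagonal, ← diagonal_one]
    exact congrArg diagonal (funext fun i => inv_mul_cancel₀ (hd i))
  rw [scalar_sub_twoClassMatrix, sub_eq_add_neg, ← Matrix.neg_mul,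
    det_add_mul _ _ (hdet ▸ by simp [ha, hb]), hdet, hinv, det_fin_two]
  simp only [mul_apply, Fintype.sum_sum_type, fromRows_apply_inl, fromRows_apply_inr,
    fromCols_apply_inl, fromCols_apply_inr, replicateRow_apply, replicateCol_apply, neg_apply,
    diagonal_apply, add_apply, one_apply]
  simp [d]
  field_simp
  ring

/-- Multiplying by `(X + C a) * (X + C b)` keeps the exponents free of natural subtraction, so
that empty classes are allowed. -/
lemma charpoly_twoClassMatrix [Infinite K] (a b c : K) :
    (X + C a) * (X + C b) * (twoClassMatrix a b c : Matrix (ι ⊕ κ) (ι ⊕ κ) K).charpoly =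
      (X + C a) ^ Fintype.card ι * (X + C b) ^ Fintype.card κ *
        ((X + C (a - Fintype.card ι * a)) * (X + C (b - Fintype.card κ * b)) -
          C (Fintype.card ι * Fintype.card κ * c ^ 2)) := by
  refine eq_of_infinite_eval_eq _ _
    (Set.Infinite.mono ?_ (Set.toFinite {-a, -b}).infinite_compl)
  intro x hx
  simp only [Set.mem_compl_iff, Set.mem_insert_iff, Set.mem_singleton_iff, not_or,
    ← add_eq_zero_iff_eq_neg] at hx
  simpa [eval_charpoly, add_sub_assoc] using det_scalar_sub_twoClassMatrix a b c x hx.1 hx.2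

end Matrix

lemma seidelEnergy_twoClassMatrix (a b c : ℝ)
    (h : (a - Fintype.card ι * a) * (b - Fintype.card κ * b) ≤
      Fintype.card ι * Fintype.card κ * c ^ 2) :
    seidelEnergy (twoClassMatrix a b c : Matrix (ι ⊕ κ) (ι ⊕ κ) ℝ) + |a| + |b| =
      Fintype.card ι * |a| + Fintype.card κ * |b| +
        √((a - Fintype.card ι * a - (b - Fintype.card κ * b)) ^ 2 +
          4 * (Fintype.card ι * Fintype.card κ * c ^ 2)) := by
  have hchar := charpoly_twoClassMatrix (ι := ι) (κ := κ) a b c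
  have hne : (X + C a) * (X + C b) *
      (twoClassMatrix a b c : Matrix (ι ⊕ κ) (ι ⊕ κ) ℝ).charpoly ≠ 0 :=
    mul_ne_zero (mul_ne_zero (X_add_C_ne_zero a) (X_add_C_ne_zero b)) (charpoly_monic _).ne_zero
  have hne' := hchar ▸ hne
  have hsum := congrArg (fun p => (p.roots.map abs).sum) hchar
  rw [roots_mul hne, roots_mul hne', roots_mul (left_ne_zero_of_mul hne),
    roots_mul (left_ne_zero_of_mul hne'), roots_pow, roots_pow, roots_X_add_C,
    roots_X_add_C] at hsum
  simp only [Multiset.map_add, Multiset.sum_add, Multiset.nsmul_singleton, Multiset.map_replicate,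
    Multiset.sum_replicate, Multiset.map_singleton, Multiset.sum_singleton, abs_neg, nsmul_eq_mul,
    sum_abs_roots_mul_sub_C _ _ _ h] at hsum
  rw [seidelEnergy]
  linarith

end TwoClass

lemma seidelS_eq_twoClassMatrix (m n : ℕ) :
    seidelS m n =
      twoClassMatrix (1 - 2 * (n : ℝ)) (1 - 2 * (m : ℝ)) (1 - 2 * ((m : ℝ) + n - 2)) := by
  ext (i | i) (j | j) <;> simp [seidelS, twoClassMatrix]

lemma seidelEnergy_seidelS (m n : ℕ) (hm : 2 ≤ m) (hn : 2 ≤ n) :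
    seidelEnergy (seidelS m n) = (m - 1) * (2 * n - 1) + (n - 1) * (2 * m - 1) +
      √((m - n) ^ 2 + 4 * m * n * (2 * m + 2 * n - 5) ^ 2) := by
  have hm' : (2 : ℝ) ≤ m := by exact_mod_cast hm
  have hn' : (2 : ℝ) ≤ n := by exact_mod_cast hn
  have hconst : (1 - 2 * (n : ℝ) - m * (1 - 2 * n)) * (1 - 2 * m - n * (1 - 2 * m)) ≤
      m * n * (1 - 2 * (m + n - 2)) ^ 2 := by
    have h1 : (2 * n - 1) * (2 * m - 1) ≤ (2 * m + 2 * n - 5 : ℝ) ^ 2 := by nlinarith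
    have h2 : (m - 1) * (n - 1) ≤ (m * n : ℝ) := by nlinarith
    nlinarith [mul_le_mul h1 h2 (by nlinarith) (by positivity)]
  have h := seidelEnergy_twoClassMatrix (ι := Fin m) (κ := Fin n) _ _ _
    (by rwa [Fintype.card_fin, Fintype.card_fin])
  rw [← seidelS_eq_twoClassMatrix, Fintype.card_fin, Fintype.card_fin,
    abs_of_nonpos (by linarith), abs_of_nonpos (by linarith)] at h
  have hdisc : (1 - 2 * (n : ℝ) - m * (1 - 2 * n) - (1 - 2 * m - n * (1 - 2 * m))) ^ 2 +
      4 * (m * n * (1 - 2 * (m + n - 2)) ^ 2) =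
      (m - n) ^ 2 + 4 * m * n * (2 * m + 2 * n - 5) ^ 2 := by
    ring
  rw [hdisc] at h
  linarith

theorem stmt18 (m n : ℕ) (hm : 2 ≤ m) (hn : 2 ≤ n) :
    seidelEnergy (seidelS m n) < seidelEnergy (seidelS (m + 1) n) := by
  rw [seidelEnergy_seidelS m n hm hn, seidelEnergy_seidelS (m + 1) n (by omega) hn]
  have hm' : (2 : ℝ) ≤ m := by exact_mod_cast hm
  have hn' : (2 : ℝ) ≤ n := by exact_mod_cast hn
  push_cast
  have hdisc : (m - n : ℝ) ^ 2 + 4 * m * n * (2 * m + 2 * n - 5) ^ 2 ≤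
      (m + 1 - n) ^ 2 + 4 * (m + 1) * n * (2 * (m + 1) + 2 * n - 5) ^ 2 := by
    nlinarith [mul_nonneg (mul_nonneg (by positivity : (0 : ℝ) ≤ n) (by positivity : (0 : ℝ) ≤ m))
      (by linarith : (0 : ℝ) ≤ 2 * m + 2 * n - 4),
      mul_nonneg (by positivity : (0 : ℝ) ≤ n)
        (by nlinarith : (0 : ℝ) ≤ (2 * m + 2 * n - 3) ^ 2 - 1)]
  linarith [Real.sqrt_le_sqrt hdisc]
end
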